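/- arXiv:1105.3931 — 4 statements merged into one kernel-verified Lean document; each statement's English description precedes it below -/
import Mathlib

section
/- Let f : [0, \infty) \to \mathbb{R} be three-times continuously differentiable with bounded third derivative. For t > 0, define the half-line heat operator L_t f(0) = t^{-1/2} \int_0^{\infty} e^{-y^2/t} (f(0) - f(y)) \, dy. Then \lim_{t \to 0^+} \frac{1}{\sqrt{t}} L_t f(0) = -\frac{1}{2} f'(0). In particular, scaled by 1/t instead of 1/\sqrt{t}, the operator diverges at the boundary point whenever f'(0) \ne 0. -/
open MeasureTheory Real Filter Set

lemma gauss_moment_integrable (k : ℕ) {b : ℝ} (hb : 0 < b) :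
    IntegrableOn (fun y : ℝ => y ^ k * Real.exp (-y ^ 2 / b)) (Ioi 0) := by
  have h := integrableOn_rpow_mul_exp_neg_mul_sq (b := 1 / b) (by positivity)
      (s := (k : ℝ)) (lt_of_lt_of_le neg_one_lt_zero (Nat.cast_nonneg k))
  refine h.congr_fun (fun y hy => ?_) measurableSet_Ioi
  simp only [Real.rpow_natCast]
  congr 1
  field_simp

lemma gauss_moment_scale (k : ℕ) {s : ℝ} (hs : 0 < s) :
    ∫ y in Ioi (0:ℝ), y ^ k * Real.exp (-y ^ 2 / s ^ 2)
      = s ^ (k + 1) * ∫ u in Ioi (0:ℝ), u ^ k * Real.exp (-u ^ 2) := by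
  have h := integral_comp_mul_left_Ioi (fun u => u ^ k * Real.exp (-u ^ 2)) 0
      (inv_pos.mpr hs)
  simp only [mul_zero, smul_eq_mul, inv_inv] at h
  have h2 : ∀ y : ℝ, (s⁻¹ * y) ^ k * Real.exp (-(s⁻¹ * y) ^ 2)
      = (s⁻¹) ^ k * (y ^ k * Real.exp (-y ^ 2 / s ^ 2)) := by
    intro y
    rw [show -(s⁻¹ * y) ^ 2 = -y ^ 2 / s ^ 2 by field_simp, mul_pow]
    ring
  simp_rw [h2, integral_const_mul] at h
  calc ∫ y in Ioi (0:ℝ), y ^ k * Real.exp (-y ^ 2 / s ^ 2)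
      = s ^ k * ((s⁻¹) ^ k * ∫ y in Ioi (0:ℝ), y ^ k * Real.exp (-y ^ 2 / s ^ 2)) := by
        rw [← mul_assoc, ← mul_pow, mul_inv_cancel₀ hs.ne', one_pow, one_mul]
    _ = s ^ k * (s * ∫ u in Ioi (0:ℝ), u ^ k * Real.exp (-u ^ 2)) := by rw [h]
    _ = s ^ (k + 1) * ∫ u in Ioi (0:ℝ), u ^ k * Real.exp (-u ^ 2) := by ring

lemma gauss_first_moment : ∫ u in Ioi (0:ℝ), u * Real.exp (-u ^ 2) = 1 / 2 := by
  have hd : ∀ x ∈ Ioi (0:ℝ), HasDerivAt (fun u : ℝ => -Real.exp (-u ^ 2) / 2)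
      (x * Real.exp (-x ^ 2)) x := by
    intro x _
    have h1 : HasDerivAt (fun u : ℝ => -u ^ 2) (-(2 * x)) x := by
      simpa using ((hasDerivAt_pow 2 x).fun_neg)
    have h2 := (h1.exp).fun_neg.div_const 2
    refine h2.congr_deriv ?_
    ring
  have hint : IntegrableOn (fun x : ℝ => x * Real.exp (-x ^ 2)) (Ioi 0) := by
    have := gauss_moment_integrable 1 (b := 1) one_pos
    simpa using this
  have htend : Tendsto (fun u : ℝ => -Real.exp (-u ^ 2) / 2) atTop (nhds 0) := by
    have h1 : Tendsto (fun u : ℝ => -u ^ 2) atTop atBot :=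
      tendsto_neg_atBot_iff.mpr (tendsto_pow_atTop two_ne_zero)
    have h2 : Tendsto (fun u : ℝ => Real.exp (-u ^ 2)) atTop (nhds 0) :=
      Real.tendsto_exp_atBot.comp h1
    have := (h2.neg).div_const 2
    simpa using this
  have hcont : ContinuousWithinAt (fun u : ℝ => -Real.exp (-u ^ 2) / 2) (Ici 0) 0 :=
    (Continuous.continuousWithinAt (by continuity))
  have := integral_Ioi_of_hasDerivAt_of_tendsto hcont hd hint htend
  rw [this]
  norm_num


lemma taylor_bound {f : ℝ → ℝ} (hf : ContDiff ℝ 3 f) {M : ℝ}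
    (hM : ∀ x, |deriv (deriv (deriv f)) x| ≤ M) :
    ∀ y : ℝ, 0 ≤ y →
      |f y - f 0 - deriv f 0 * y - deriv (deriv f) 0 / 2 * y ^ 2| ≤ M / 6 * y ^ 3 := by
  set d1 := deriv f with hd1
  set d2 := deriv d1 with hd2
  set d3 := deriv d2 with hd3
  have h1 := contDiff_succ_iff_deriv.mp (show ContDiff ℝ (2+1) f from by norm_num [hf])
  have hdf : Differentiable ℝ f := h1.1
  have hc2 : ContDiff ℝ 2 d1 := h1.2.2
  have h2 := contDiff_succ_iff_deriv.mp (show ContDiff ℝ (1+1) d1 from by norm_num [hc2])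
  have hdd1 : Differentiable ℝ d1 := h2.1
  have hc1 : ContDiff ℝ 1 d2 := h2.2.2
  have hdd2 : Differentiable ℝ d2 := hc1.differentiable one_ne_zero
  have hcont1 : Continuous d1 := hdd1.continuous
  have hcont2 : Continuous d2 := hdd2.continuous
  -- step 1 : Lipschitz bound on d2
  have hlip : ∀ y : ℝ, 0 ≤ y → |d2 y - d2 0| ≤ M * y := by
    intro y hy
    have := convex_univ.norm_image_sub_le_of_norm_deriv_le (f := d2) (C := M)
      (fun x _ => (hdd2 x)) (fun x _ => by simpa using hM x) (mem_univ 0) (mem_univ y)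
    simpa [abs_of_nonneg hy] using this
  -- step 2 : quadratic bound on d1
  have hquad : ∀ y : ℝ, 0 ≤ y → |d1 y - d1 0 - d2 0 * y| ≤ M / 2 * y ^ 2 := by
    intro y hy
    have key : d1 y - d1 0 - d2 0 * y = ∫ s in (0:ℝ)..y, (d2 s - d2 0) := by
      rw [intervalIntegral.integral_sub (hcont2.intervalIntegrable _ _)
        (intervalIntegrable_const),
        intervalIntegral.integral_deriv_eq_sub (fun x _ => hdd1 x)
          (hcont2.intervalIntegrable _ _),
        intervalIntegral.integral_const]
      simp
      ring
    rw [key]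
    calc |∫ s in (0:ℝ)..y, (d2 s - d2 0)| ≤ ∫ s in (0:ℝ)..y, |d2 s - d2 0| :=
          intervalIntegral.abs_integral_le_integral_abs hy
      _ ≤ ∫ s in (0:ℝ)..y, M * s := by
          apply intervalIntegral.integral_mono_on hy
            ((hcont2.sub continuous_const).abs.intervalIntegrable _ _)
            ((continuous_const.mul continuous_id).intervalIntegrable _ _)
          intro s hs
          exact hlip s hs.1
      _ = M / 2 * y ^ 2 := by
          rw [intervalIntegral.integral_const_mul, integral_id]
          ring
  -- step 3 : cubic bound on f
  intro y hy
  have i2 : IntervalIntegrable (fun s : ℝ => d2 0 * s) volume 0 y :=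
    (by continuity : Continuous fun s : ℝ => d2 0 * s).intervalIntegrable _ _
  have key : f y - f 0 - d1 0 * y - d2 0 / 2 * y ^ 2
      = ∫ s in (0:ℝ)..y, (d1 s - d1 0 - d2 0 * s) := by
    rw [intervalIntegral.integral_sub (f := fun s => d1 s - d1 0)
        ((hcont1.sub continuous_const).intervalIntegrable _ _) i2,
      intervalIntegral.integral_sub (hcont1.intervalIntegrable _ _)
        (intervalIntegrable_const),
      intervalIntegral.integral_deriv_eq_sub (fun x _ => hdf x)
        (hcont1.intervalIntegrable _ _),
      intervalIntegral.integral_const, intervalIntegral.integral_const_mul, integral_id]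
    simp
    ring
  rw [key]
  calc |∫ s in (0:ℝ)..y, (d1 s - d1 0 - d2 0 * s)|
      ≤ ∫ s in (0:ℝ)..y, |d1 s - d1 0 - d2 0 * s| :=
        intervalIntegral.abs_integral_le_integral_abs hy
    _ ≤ ∫ s in (0:ℝ)..y, M / 2 * s ^ 2 := by
        apply intervalIntegral.integral_mono_on hy
          (((hcont1.sub continuous_const).sub (continuous_const.mul continuous_id)).abs.intervalIntegrable _ _)
          ((continuous_const.mul (continuous_pow 2)).intervalIntegrable _ _)
        intro s hs
        exact hquad s hs.1
    _ = M / 6 * y ^ 3 := by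
        rw [intervalIntegral.integral_const_mul, integral_pow]
        norm_num
        ring

theorem boundary_limit_halfline (f : ℝ → ℝ) (hf : ContDiff ℝ 3 f)
    (M : ℝ) (hM : ∀ x, |iteratedDeriv 3 f x| ≤ M) :
    Tendsto (fun t : ℝ =>
        (1 / t) * ∫ y in Set.Ioi (0:ℝ), Real.exp (-y ^ 2 / t) * (f 0 - f y))
      (nhdsWithin 0 (Set.Ioi 0)) (nhds (-(1 / 2) * deriv f 0)) := by
  have hM' : ∀ x, |deriv (deriv (deriv f)) x| ≤ M := by
    intro x
    have h3 : iteratedDeriv 3 f = deriv (deriv (deriv f)) := by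
      rw [show (3:ℕ) = 2 + 1 from rfl, iteratedDeriv_succ,
        show (2:ℕ) = 1 + 1 from rfl, iteratedDeriv_succ, iteratedDeriv_one]
    rw [← h3]; exact hM x
  have hM0 : 0 ≤ M := le_trans (abs_nonneg _) (hM 0)
  have hTay := taylor_bound hf hM'
  set a1 := deriv f 0 with ha1
  set a2 := deriv (deriv f) 0 with ha2
  set C2 := ∫ u in Ioi (0:ℝ), u ^ 2 * Real.exp (-u ^ 2) with hC2def
  set C3 := ∫ u in Ioi (0:ℝ), u ^ 3 * Real.exp (-u ^ 2) with hC3def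
  have hC2 : 0 ≤ C2 := setIntegral_nonneg measurableSet_Ioi fun u hu => by positivity
  have hC3 : 0 ≤ C3 := setIntegral_nonneg measurableSet_Ioi fun u hu => by
    have h0u : (0:ℝ) < u := hu
    positivity
  set R : ℝ → ℝ := fun y => f y - f 0 - a1 * y - a2 / 2 * y ^ 2 with hRdef
  have hRc : Continuous R :=
    ((hf.continuous.sub continuous_const).sub (continuous_const.mul continuous_id)).sub
      (continuous_const.mul (continuous_pow 2))
  have est : ∀ t ∈ Ioi (0:ℝ),
      |(1 / t) * (∫ y in Set.Ioi (0:ℝ), Real.exp (-y ^ 2 / t) * (f 0 - f y))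
          - (-(1 / 2) * a1)|
        ≤ |a2| / 2 * C2 * Real.sqrt t + M / 6 * C3 * t := by
    intro t ht
    rw [mem_Ioi] at ht
    set s := Real.sqrt t with hsdef
    have hs : 0 < s := Real.sqrt_pos.mpr ht
    have hs2 : s ^ 2 = t := Real.sq_sqrt ht.le
    have hexpc : Continuous fun y : ℝ => Real.exp (-y ^ 2 / t) :=
      Real.continuous_exp.comp ((continuous_pow 2).neg.div_const t)
    have I1 := gauss_moment_integrable 1 ht
    have I2 := gauss_moment_integrable 2 ht
    have I3 := gauss_moment_integrable 3 ht
    have hIRint : IntegrableOn (fun y : ℝ => Real.exp (-y ^ 2 / t) * R y) (Ioi 0) := by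
      apply Integrable.mono' (I3.const_mul (M / 6))
        ((hexpc.mul hRc).aestronglyMeasurable)
      rw [ae_restrict_iff' measurableSet_Ioi]
      apply ae_of_all
      intro y hy
      rw [mem_Ioi] at hy
      have hb := hTay y hy.le
      have hexp : 0 < Real.exp (-y ^ 2 / t) := Real.exp_pos _
      simp only [Real.norm_eq_abs, Pi.mul_apply]
      rw [abs_mul, abs_of_pos hexp]
      calc Real.exp (-y ^ 2 / t) * |R y| ≤ Real.exp (-y ^ 2 / t) * (M / 6 * y ^ 3) := by
            exact mul_le_mul_of_nonneg_left hb hexp.le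
        _ = M / 6 * (y ^ 3 * Real.exp (-y ^ 2 / t)) := by ring
    set IR := ∫ y in Ioi (0:ℝ), Real.exp (-y ^ 2 / t) * R y with hIRdef
    have hJ1 : ∫ y in Ioi (0:ℝ), y ^ 1 * Real.exp (-y ^ 2 / t) = s ^ 2 * (1 / 2) := by
      rw [← hs2, gauss_moment_scale 1 hs]
      have h : ∫ u in Ioi (0:ℝ), u ^ 1 * Real.exp (-u ^ 2) = 1 / 2 := by
        simpa [pow_one] using gauss_first_moment
      rw [h]
    have hJ2 : ∫ y in Ioi (0:ℝ), y ^ 2 * Real.exp (-y ^ 2 / t) = s ^ 3 * C2 := by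
      rw [← hs2, gauss_moment_scale 2 hs]
    have hJ3 : ∫ y in Ioi (0:ℝ), y ^ 3 * Real.exp (-y ^ 2 / t) = s ^ 4 * C3 := by
      rw [← hs2, gauss_moment_scale 3 hs]
    have hsplit : ∀ y : ℝ, Real.exp (-y ^ 2 / t) * (f 0 - f y)
        = (-a1) * (y ^ 1 * Real.exp (-y ^ 2 / t))
          + (-(a2 / 2)) * (y ^ 2 * Real.exp (-y ^ 2 / t))
          + (-1) * (Real.exp (-y ^ 2 / t) * R y) := by
      intro y
      simp only [hRdef]
      ring
    have hIntegral : (∫ y in Set.Ioi (0:ℝ), Real.exp (-y ^ 2 / t) * (f 0 - f y))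
        = (-a1) * (s ^ 2 * (1 / 2)) + (-(a2 / 2)) * (s ^ 3 * C2) + (-1) * IR := by
      have hA : IntegrableOn (fun y : ℝ => (-a1) * (y ^ 1 * Real.exp (-y ^ 2 / t)))
          (Ioi 0) := I1.const_mul _
      have hB : IntegrableOn (fun y : ℝ => (-(a2 / 2)) * (y ^ 2 * Real.exp (-y ^ 2 / t)))
          (Ioi 0) := I2.const_mul _
      have hAB : IntegrableOn (fun y : ℝ => (-a1) * (y ^ 1 * Real.exp (-y ^ 2 / t))
          + (-(a2 / 2)) * (y ^ 2 * Real.exp (-y ^ 2 / t))) (Ioi 0) := hA.add hB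
      have hCc : IntegrableOn (fun y : ℝ => (-1 : ℝ) * (Real.exp (-y ^ 2 / t) * R y))
          (Ioi 0) := hIRint.const_mul _
      simp_rw [hsplit]
      rw [integral_add hAB hCc, integral_add hA hB,
        integral_const_mul, integral_const_mul, integral_const_mul, hJ1, hJ2]
    have hIRb : |IR| ≤ M / 6 * (s ^ 4 * C3) := by
      calc |IR| ≤ ∫ y in Ioi (0:ℝ), M / 6 * (y ^ 3 * Real.exp (-y ^ 2 / t)) := by
            rw [← Real.norm_eq_abs]
            apply norm_integral_le_of_norm_le (I3.const_mul (M / 6))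
            rw [ae_restrict_iff' measurableSet_Ioi]
            apply ae_of_all
            intro y hy
            rw [mem_Ioi] at hy
            have hb := hTay y hy.le
            have hexp : 0 < Real.exp (-y ^ 2 / t) := Real.exp_pos _
            rw [Real.norm_eq_abs, abs_mul, abs_of_pos hexp]
            calc Real.exp (-y ^ 2 / t) * |R y|
                ≤ Real.exp (-y ^ 2 / t) * (M / 6 * y ^ 3) :=
                  mul_le_mul_of_nonneg_left hb hexp.le
              _ = M / 6 * (y ^ 3 * Real.exp (-y ^ 2 / t)) := by ring
        _ = M / 6 * (s ^ 4 * C3) := by rw [integral_const_mul, hJ3]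
    have hteq : (1 / t) * (∫ y in Set.Ioi (0:ℝ), Real.exp (-y ^ 2 / t) * (f 0 - f y))
        - (-(1 / 2) * a1) = -(a2 / 2 * (s * C2)) - (1 / t) * IR := by
      rw [hIntegral, ← hs2]
      field_simp
      ring
    rw [hteq]
    have h1 : |(1 / t) * IR| ≤ M / 6 * C3 * t := by
      rw [abs_mul, abs_of_pos (by positivity : (0:ℝ) < 1 / t)]
      calc 1 / t * |IR| ≤ 1 / t * (M / 6 * (s ^ 4 * C3)) := by
            apply mul_le_mul_of_nonneg_left hIRb (by positivity)
        _ = M / 6 * C3 * t := by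
            rw [← hs2]; field_simp
    have h2 : |a2 / 2 * (s * C2)| ≤ |a2| / 2 * C2 * s := by
      rw [abs_mul, abs_of_nonneg (by positivity : (0:ℝ) ≤ s * C2), abs_div]
      rw [abs_two]
      ring_nf
      exact le_refl _
    calc |(-(a2 / 2 * (s * C2)) - 1 / t * IR)|
        ≤ |(-(a2 / 2 * (s * C2)))| + |1 / t * IR| := abs_sub _ _
      _ = |a2 / 2 * (s * C2)| + |1 / t * IR| := by rw [abs_neg]
      _ ≤ |a2| / 2 * C2 * s + M / 6 * C3 * t := add_le_add h2 h1
  have hlim : Tendsto (fun t : ℝ => |a2| / 2 * C2 * Real.sqrt t + M / 6 * C3 * t)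
      (nhdsWithin 0 (Ioi 0)) (nhds 0) := by
    have hcont : Continuous fun t : ℝ => |a2| / 2 * C2 * Real.sqrt t + M / 6 * C3 * t :=
      (continuous_const.mul Real.continuous_sqrt).add (continuous_const.mul continuous_id)
    have h0 := hcont.tendsto 0
    simp only [Real.sqrt_zero, mul_zero, id, add_zero] at h0
    exact h0.mono_left nhdsWithin_le_nhds
  rw [tendsto_iff_dist_tendsto_zero]
  refine squeeze_zero' (Eventually.of_forall fun t => dist_nonneg) ?_ hlim
  filter_upwards [self_mem_nhdsWithin] with t ht
  rw [Real.dist_eq]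
  exact est t ht
end

section
/- Let f : \mathbb{R} \to \mathbb{R} be three-times continuously differentiable with bounded third derivative, and let x \in \mathbb{R}. Define L_t f(x) = t^{-1/2} \int_{\mathbb{R}} e^{-(x-y)^2/t} (f(x) - f(y)) \, dy. Then \lim_{t \to 0^+} \frac{1}{t} L_t f(x) = -\frac{\sqrt{\pi}}{4} f''(x). -/
open MeasureTheory Real Filter

open Topology


lemma abs_le_of_uIcc {v w : ℝ} (hw : w ∈ Set.uIcc 0 v) : |w| ≤ |v| := by
  rcases le_total 0 v with h | h
  · rw [Set.uIcc_of_le h] at hw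
    rw [abs_of_nonneg hw.1, abs_of_nonneg h]; exact hw.2
  · rw [Set.uIcc_of_ge h] at hw
    rw [abs_of_nonpos hw.2, abs_of_nonpos h]; linarith [hw.1]

lemma mvt_aux (g g' : ℝ → ℝ) (C v : ℝ) (hg : ∀ w, HasDerivAt g (g' w) w)
    (hC : ∀ w ∈ Set.uIcc 0 v, |g' w| ≤ C) (hg0 : g 0 = 0) : |g v| ≤ C * |v| := by
  have h := (convex_uIcc (0:ℝ) v).norm_image_sub_le_of_norm_hasDerivWithin_le
    (f := g) (f' := g')
    (fun w hw => (hg w).hasDerivWithinAt)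
    (fun w hw => by simpa [Real.norm_eq_abs] using hC w hw)
    Set.left_mem_uIcc Set.right_mem_uIcc
  simpa [hg0, Real.norm_eq_abs] using h

lemma taylor3_bound (f : ℝ → ℝ) (hf : ContDiff ℝ 3 f) (M : ℝ)
    (hM : ∀ y, |deriv (deriv (deriv f)) y| ≤ M) (x : ℝ) (v : ℝ) :
    |f (x + v) - f x - deriv f x * v - deriv (deriv f) x * v ^ 2 / 2| ≤ M * |v| ^ 3 := by
  have hM0 : 0 ≤ M := le_trans (abs_nonneg _) (hM 0)
  have hd0 : Differentiable ℝ f := hf.differentiable (by norm_num)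
  have hd1 : Differentiable ℝ (deriv f) := by
    have := hf.differentiable_iteratedDeriv 1 (by norm_num)
    rwa [iteratedDeriv_one] at this
  have hd2 : Differentiable ℝ (deriv (deriv f)) := by
    have := hf.differentiable_iteratedDeriv 2 (by norm_num)
    rwa [iteratedDeriv_succ, iteratedDeriv_one] at this
  have h2lip : ∀ y z : ℝ, |deriv (deriv f) y - deriv (deriv f) z| ≤ M * |y - z| := by
    intro y z
    have h := convex_univ.norm_image_sub_le_of_norm_deriv_le
      (f := deriv (deriv f)) (C := M)
      (fun w _ => hd2 w) (fun w _ => by simpa [Real.norm_eq_abs] using hM w)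
      (Set.mem_univ z) (Set.mem_univ y)
    simpa [Real.norm_eq_abs] using h
  have hstep1 : ∀ r : ℝ, |deriv f (x + r) - deriv f x - deriv (deriv f) x * r|
      ≤ (M * |r|) * |r| := by
    intro r
    apply mvt_aux _ (fun w => deriv (deriv f) (x + w) - deriv (deriv f) x) _ r
    · intro w
      have h1 : HasDerivAt (fun w => deriv f (x + w)) (deriv (deriv f) (x + w)) w := by
        simpa [Function.comp_def] using ((hd1 (x + w)).hasDerivAt).comp w ((hasDerivAt_id w).const_add x)
      have hlin : HasDerivAt (fun w : ℝ => deriv (deriv f) x * w) (deriv (deriv f) x) w := by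
        simpa using (hasDerivAt_id w).const_mul (deriv (deriv f) x)
      exact (h1.sub_const (deriv f x)).sub hlin
    · intro w hw
      have h := h2lip (x + w) x
      have h2 : |deriv (deriv f) (x + w) - deriv (deriv f) x| ≤ M * |w| := by
        simpa using h
      exact h2.trans (mul_le_mul_of_nonneg_left (abs_le_of_uIcc hw) hM0)
    · simp
  have hstep2 : |f (x + v) - f x - deriv f x * v - deriv (deriv f) x * v ^ 2 / 2|
      ≤ (M * |v| ^ 2) * |v| := by
    apply mvt_aux _ (fun w => deriv f (x + w) - deriv f x - deriv (deriv f) x * w) _ v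
    · intro w
      have h1 : HasDerivAt (fun w => f (x + w)) (deriv f (x + w)) w := by
        simpa [Function.comp_def] using ((hd0 (x + w)).hasDerivAt).comp w ((hasDerivAt_id w).const_add x)
      have hlin : HasDerivAt (fun w : ℝ => deriv f x * w) (deriv f x) w := by
        simpa using (hasDerivAt_id w).const_mul (deriv f x)
      have h2 : HasDerivAt (fun w : ℝ => deriv (deriv f) x * w ^ 2 / 2)
          (deriv (deriv f) x * w) w := by
        have h := ((hasDerivAt_pow 2 w).const_mul (deriv (deriv f) x)).div_const 2
        refine h.congr_deriv ?_
        push_cast; ring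
      exact ((h1.sub_const (f x)).sub hlin).sub h2
    · intro w hw
      refine (hstep1 w).trans ?_
      have habs := abs_le_of_uIcc hw
      have hmm : |w| * |w| ≤ |v| * |v| := mul_le_mul habs habs (abs_nonneg w) (abs_nonneg v)
      nlinarith [hmm, hM0]
    · simp
  calc |f (x + v) - f x - deriv f x * v - deriv (deriv f) x * v ^ 2 / 2|
      ≤ (M * |v| ^ 2) * |v| := hstep2
    _ = M * |v| ^ 3 := by ring


lemma integrable_sq_gauss : Integrable (fun u : ℝ => u ^ 2 * Real.exp (-u ^ 2)) := by
  apply Integrable.mono' ((integrable_exp_neg_mul_sq (by norm_num : (0:ℝ) < 1/2)).const_mul 2)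
  · exact ((continuous_pow 2).mul ((continuous_pow 2).neg.rexp)).aestronglyMeasurable
  · filter_upwards with u
    rw [Real.norm_eq_abs, abs_of_nonneg (by positivity)]
    have h1 : u ^ 2 / 2 + 1 ≤ Real.exp (u ^ 2 / 2) := Real.add_one_le_exp _
    have h2 : u ^ 2 ≤ 2 * Real.exp (u ^ 2 / 2) := by nlinarith [Real.exp_pos (u ^ 2 / 2)]
    calc u ^ 2 * Real.exp (-u ^ 2)
        ≤ 2 * Real.exp (u ^ 2 / 2) * Real.exp (-u ^ 2) :=
          mul_le_mul_of_nonneg_right h2 (Real.exp_pos _).le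
      _ = 2 * Real.exp (-(1/2) * u ^ 2) := by
          rw [mul_assoc, ← Real.exp_add]; ring_nf

lemma integrable_quartic_gauss : Integrable (fun u : ℝ => u ^ 4 * Real.exp (-u ^ 2)) := by
  apply Integrable.mono' ((integrable_exp_neg_mul_sq (by norm_num : (0:ℝ) < 1/2)).const_mul 16)
  · exact ((continuous_pow 4).mul ((continuous_pow 2).neg.rexp)).aestronglyMeasurable
  · filter_upwards with u
    rw [Real.norm_eq_abs, abs_of_nonneg (by positivity)]
    have h1 : u ^ 2 / 4 + 1 ≤ Real.exp (u ^ 2 / 4) := Real.add_one_le_exp _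
    have h2 : u ^ 4 ≤ 16 * (Real.exp (u ^ 2 / 4) * Real.exp (u ^ 2 / 4)) := by
      nlinarith [Real.exp_pos (u ^ 2 / 4), sq_nonneg (u^2)]
    have h3 : Real.exp (u ^ 2 / 4) * Real.exp (u ^ 2 / 4) = Real.exp (u ^ 2 / 2) := by
      rw [← Real.exp_add]; ring_nf
    rw [h3] at h2
    calc u ^ 4 * Real.exp (-u ^ 2)
        ≤ 16 * Real.exp (u ^ 2 / 2) * Real.exp (-u ^ 2) :=
          mul_le_mul_of_nonneg_right h2 (Real.exp_pos _).le
      _ = 16 * Real.exp (-(1/2) * u ^ 2) := by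
          rw [mul_assoc, ← Real.exp_add]; ring_nf

lemma integrable_gauss : Integrable (fun u : ℝ => Real.exp (-u ^ 2)) := by
  simpa using integrable_exp_neg_mul_sq (by norm_num : (0:ℝ) < 1)

lemma tendsto_mul_gauss_atTop : Tendsto (fun u : ℝ => u * Real.exp (-u ^ 2)) atTop (𝓝 0) := by
  have h := tendsto_pow_mul_exp_neg_atTop_nhds_zero 1
  apply squeeze_zero' (g := fun u : ℝ => u ^ 1 * Real.exp (-u))
  · filter_upwards [eventually_ge_atTop (0:ℝ)] with u hu
    positivity
  · filter_upwards [eventually_ge_atTop (1:ℝ)] with u hu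
    have : -u ^ 2 ≤ -u := by nlinarith
    have := Real.exp_le_exp.mpr this
    calc u * Real.exp (-u ^ 2) ≤ u * Real.exp (-u) :=
      mul_le_mul_of_nonneg_left this (by linarith)
    _ = u ^ 1 * Real.exp (-u) := by ring
  · exact h

lemma tendsto_mul_gauss_atBot : Tendsto (fun u : ℝ => u * Real.exp (-u ^ 2)) atBot (𝓝 0) := by
  have h := tendsto_mul_gauss_atTop.comp tendsto_neg_atBot_atTop
  have h2 : (fun u : ℝ => (-u) * Real.exp (-(-u) ^ 2)) = fun u : ℝ => -(u * Real.exp (-u ^ 2)) := by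
    funext u; rw [neg_sq]; ring
  rw [Function.comp_def] at h
  rw [h2] at h
  simpa using h.neg

lemma integral_sq_gauss : ∫ u : ℝ, u ^ 2 * Real.exp (-u ^ 2) = Real.sqrt π / 2 := by
  set G' : ℝ → ℝ := fun u => Real.exp (-u ^ 2) - 2 * (u ^ 2 * Real.exp (-u ^ 2)) with hG'def
  have hG : ∀ u : ℝ, HasDerivAt (fun w : ℝ => w * Real.exp (-w ^ 2)) (G' u) u := by
    intro u
    have h1 : HasDerivAt (fun w : ℝ => -w ^ 2) (-(2 * u)) u := by
      have := (hasDerivAt_pow 2 u).neg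
      refine this.congr_deriv ?_
      push_cast; ring
    have h2 : HasDerivAt (fun w : ℝ => Real.exp (-w ^ 2)) (Real.exp (-u ^ 2) * -(2 * u)) u :=
      (Real.hasDerivAt_exp _).comp u h1
    have h3 := (hasDerivAt_id u).mul h2
    refine h3.congr_deriv ?_
    simp [hG'def]; ring
  have hint : Integrable G' := by
    exact integrable_gauss.sub (integrable_sq_gauss.const_mul 2)
  have hIoi : ∫ u in Set.Ioi (0:ℝ), G' u = 0 - 0 * Real.exp (-(0:ℝ) ^ 2) :=
    integral_Ioi_of_hasDerivAt_of_tendsto' (fun u _ => hG u) hint.integrableOn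
      tendsto_mul_gauss_atTop
  have hIic : ∫ u in Set.Iic (0:ℝ), G' u = 0 * Real.exp (-(0:ℝ) ^ 2) - 0 :=
    integral_Iic_of_hasDerivAt_of_tendsto' (fun u _ => hG u) hint.integrableOn
      tendsto_mul_gauss_atBot
  have htot : ∫ u : ℝ, G' u = 0 := by
    rw [← intervalIntegral.integral_Iic_add_Ioi (b := (0:ℝ)) hint.integrableOn hint.integrableOn, hIoi, hIic]
    simp
  rw [hG'def] at htot
  rw [integral_sub integrable_gauss (integrable_sq_gauss.const_mul 2),
    integral_const_mul] at htot
  have hg : ∫ u : ℝ, Real.exp (-u ^ 2) = Real.sqrt π := by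
    simpa using integral_gaussian 1
  rw [hg] at htot
  linarith

theorem interior_limit_line (f : ℝ → ℝ) (hf : ContDiff ℝ 3 f)
    (M : ℝ) (hM : ∀ x, |iteratedDeriv 3 f x| ≤ M) (x : ℝ) :
    Tendsto (fun t : ℝ =>
        (1 / (t * Real.sqrt t)) *
          ∫ y : ℝ, Real.exp (-(x - y) ^ 2 / t) * (f x - f y))
      (nhdsWithin 0 (Set.Ioi 0))
      (nhds (-(Real.sqrt Real.pi / 4) * iteratedDeriv 2 f x)) := by
  have hM0 : 0 ≤ M := le_trans (abs_nonneg _) (hM 0)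
  have hd3M : ∀ y, |deriv (deriv (deriv f)) y| ≤ M := by
    intro y; have h := hM y
    rwa [iteratedDeriv_succ, iteratedDeriv_succ, iteratedDeriv_one] at h
  have hcont : Continuous f := hf.continuous
  set c1 : ℝ := deriv f x with hc1
  set c2 : ℝ := deriv (deriv f) x with hc2
  have hiter2 : iteratedDeriv 2 f x = c2 := by
    rw [iteratedDeriv_succ, iteratedDeriv_one]
  have hT : ∀ v : ℝ, |f (x + v) - f x - c1 * v - c2 * v ^ 2 / 2| ≤ M * |v| ^ 3 :=
    fun v => taylor3_bound f hf M hd3M x v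
  have habs1 : ∀ u : ℝ, |u| ≤ 1 + u ^ 2 := by
    intro u; nlinarith [sq_nonneg (|u| - 1), sq_abs u]
  have habs3 : ∀ u : ℝ, |u| ^ 3 ≤ u ^ 2 + u ^ 4 := by
    intro u
    calc |u| ^ 3 = u ^ 2 * |u| := by rw [pow_succ, sq_abs]
      _ ≤ u ^ 2 * (1 + u ^ 2) := mul_le_mul_of_nonneg_left (habs1 u) (sq_nonneg u)
      _ = u ^ 2 + u ^ 4 := by ring
  -- integrability of the substituted integrand, for any scaling c
  have hInt : ∀ c : ℝ, Integrable (fun u : ℝ => Real.exp (-u ^ 2) * (f x - f (x + c * u))) := by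
    intro c
    set A : ℝ := |c1| * |c| + |c2| * c ^ 2 / 2 + M * |c| ^ 3 with hA
    clear_value A
    have hA0 : 0 ≤ A := by rw [hA]; positivity
    have hp1 : (0:ℝ) ≤ |c1| * |c| := by positivity
    have hp2 : (0:ℝ) ≤ |c2| * c ^ 2 / 2 := by positivity
    have hp3 : (0:ℝ) ≤ M * |c| ^ 3 := by positivity
    have ha1 : |c1| * |c| ≤ A := by rw [hA]; linarith
    have ha2 : |c2| * c ^ 2 / 2 ≤ A := by rw [hA]; linarith
    have ha3 : M * |c| ^ 3 ≤ A := by rw [hA]; linarith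
    have hmaj : Integrable (fun u : ℝ => Real.exp (-u ^ 2) * (A + 3 * A * u ^ 2 + A * u ^ 4)) := by
      have h := (integrable_gauss.const_mul A).add
        ((integrable_sq_gauss.const_mul (3 * A)).add (integrable_quartic_gauss.const_mul A))
      exact h.congr (ae_of_all _ fun u => by simp only [Pi.add_apply]; ring)
    apply hmaj.mono'
    · apply Continuous.aestronglyMeasurable
      exact ((continuous_pow 2).neg.rexp).mul
        (continuous_const.sub (hcont.comp (continuous_const.add (continuous_const.mul continuous_id))))
    · filter_upwards with u
      have hTv := hT (c * u)
      have hbd : |f x - f (x + c * u)| ≤ |c1| * |c * u| + |c2| * (c * u) ^ 2 / 2 + M * |c * u| ^ 3 := by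
        have h0 : f x - f (x + c * u) =
            -(f (x + c * u) - f x - c1 * (c * u) - c2 * (c * u) ^ 2 / 2)
              + (-(c1 * (c * u)) + -(c2 * (c * u) ^ 2 / 2)) := by ring
        rw [h0]
        refine le_trans (abs_add_le _ _) ?_
        refine le_trans (add_le_add le_rfl (abs_add_le _ _)) ?_
        rw [abs_neg, abs_neg, abs_neg]
        have e1 : |c1 * (c * u)| ≤ |c1| * |c * u| := le_of_eq (abs_mul _ _)
        have e2 : |c2 * (c * u) ^ 2 / 2| ≤ |c2| * (c * u) ^ 2 / 2 := by
          rw [abs_div, abs_mul, abs_of_nonneg (sq_nonneg (c * u))]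
          simp
        linarith [hTv, e1, e2]
      have hre : |c1| * |c * u| + |c2| * (c * u) ^ 2 / 2 + M * |c * u| ^ 3
          = (|c1| * |c|) * |u| + (|c2| * c ^ 2 / 2) * u ^ 2 + (M * |c| ^ 3) * |u| ^ 3 := by
        simp only [abs_mul, mul_pow]; ring
      have hfinal : |f x - f (x + c * u)| ≤ A + 3 * A * u ^ 2 + A * u ^ 4 := by
        rw [hre] at hbd
        have b1 : (|c1| * |c|) * |u| ≤ A * (1 + u ^ 2) :=
          le_trans (mul_le_mul_of_nonneg_right ha1 (abs_nonneg u))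
            (mul_le_mul_of_nonneg_left (habs1 u) hA0)
        have b2 : (|c2| * c ^ 2 / 2) * u ^ 2 ≤ A * u ^ 2 :=
          mul_le_mul_of_nonneg_right ha2 (sq_nonneg u)
        have b3 : (M * |c| ^ 3) * |u| ^ 3 ≤ A * (u ^ 2 + u ^ 4) :=
          le_trans (mul_le_mul_of_nonneg_right ha3 (pow_nonneg (abs_nonneg u) 3))
            (mul_le_mul_of_nonneg_left (habs3 u) hA0)
        nlinarith [hbd, b1, b2, b3]
      rw [Real.norm_eq_abs, abs_mul, abs_of_pos (Real.exp_pos _)]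
      exact mul_le_mul_of_nonneg_left hfinal (Real.exp_pos _).le
  -- the symmetrized integrand
  set F : ℝ → ℝ → ℝ := fun t u =>
    Real.exp (-u ^ 2) *
      ((2 * f x - f (x + Real.sqrt t * u) - f (x - Real.sqrt t * u)) / (2 * t)) with hF
  set L : ℝ → ℝ := fun u => Real.exp (-u ^ 2) * (-c2 * u ^ 2 / 2) with hL
  -- the remainder
  have hdiff : ∀ t : ℝ, 0 < t → ∀ u : ℝ,
      |F t u - L u| ≤ Real.exp (-u ^ 2) * (M * |u| ^ 3) * Real.sqrt t := by
    intro t ht u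
    set s : ℝ := Real.sqrt t with hs
    have hs0 : 0 < s := Real.sqrt_pos.mpr ht
    have hss : s * s = t := Real.mul_self_sqrt ht.le
    have ht0 : t ≠ 0 := ne_of_gt ht
    have halg : F t u - L u
        = Real.exp (-u ^ 2) *
          (-((f (x + s * u) - f x - c1 * (s * u) - c2 * (s * u) ^ 2 / 2)
            + (f (x + -(s * u)) - f x - c1 * (-(s * u)) - c2 * (-(s * u)) ^ 2 / 2)) / (2 * t)) := by
      simp only [hF, hL]
      rw [← hs]
      rw [show x - s * u = x + -(s * u) by ring]
      rw [← mul_sub]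
      congr 1
      rw [div_sub' (by positivity : (2:ℝ) * t ≠ 0)]
      rw [div_eq_div_iff (by positivity : (2:ℝ) * t ≠ 0) (by positivity : (2:ℝ) * t ≠ 0)]
      have hsq : (s * u) ^ 2 = t * u ^ 2 := by rw [← hss]; ring
      linear_combination (2 * t * c2) * hsq - (4 * t * c2 * u ^ 2) * hss
    have hb1 := hT (s * u)
    have hb2 := hT (-(s * u))
    have habsu : |s * u| ^ 3 = s ^ 3 * |u| ^ 3 := by
      rw [abs_mul, mul_pow, abs_of_pos hs0]
    rw [habsu] at hb1
    rw [abs_neg] at hb2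
    rw [habsu] at hb2
    rw [halg, abs_mul, abs_of_pos (Real.exp_pos _)]
    have hsum : |(-((f (x + s * u) - f x - c1 * (s * u) - c2 * (s * u) ^ 2 / 2)
            + (f (x + -(s * u)) - f x - c1 * (-(s * u)) - c2 * (-(s * u)) ^ 2 / 2)) / (2 * t))|
        ≤ M * |u| ^ 3 * s := by
      rw [abs_div, abs_neg]
      have h2t : |2 * t| = 2 * t := abs_of_pos (by positivity)
      rw [h2t]
      rw [div_le_iff₀ (by positivity : (0:ℝ) < 2 * t)]
      have htri := abs_add_le (f (x + s * u) - f x - c1 * (s * u) - c2 * (s * u) ^ 2 / 2)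
        (f (x + -(s * u)) - f x - c1 * (-(s * u)) - c2 * (-(s * u)) ^ 2 / 2)
      refine le_trans htri ?_
      have heq : M * (s ^ 3 * |u| ^ 3) + M * (s ^ 3 * |u| ^ 3) = M * |u| ^ 3 * s * (2 * t) := by
        rw [show s ^ 3 = s * t by rw [← hss]; ring]; ring
      linarith [hb1, hb2]
    refine le_trans (mul_le_mul_of_nonneg_left hsum (Real.exp_pos _).le) (le_of_eq (by ring))
  -- change of variables + symmetrization
  have key_eq : ∀ t : ℝ, t ∈ Set.Ioi (0:ℝ) →
      (1 / (t * Real.sqrt t)) * ∫ y : ℝ, Real.exp (-(x - y) ^ 2 / t) * (f x - f y)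
        = ∫ u : ℝ, F t u := by
    intro t ht
    have ht0 : (0:ℝ) < t := ht
    set s : ℝ := Real.sqrt t with hs
    have hs0 : 0 < s := Real.sqrt_pos.mpr ht0
    have hss : s * s = t := Real.mul_self_sqrt ht0.le
    have htne : t ≠ 0 := ne_of_gt ht0
    have hsne : s ≠ 0 := ne_of_gt hs0
    -- substitution y = x + s u
    have hsub : ∫ y : ℝ, Real.exp (-(x - y) ^ 2 / t) * (f x - f y)
        = s * ∫ u : ℝ, Real.exp (-u ^ 2) * (f x - f (x + s * u)) := by
      have h1 := MeasureTheory.Measure.integral_comp_mul_left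
        (fun v : ℝ => Real.exp (-(x - (x + v)) ^ 2 / t) * (f x - f (x + v))) s
      have h2 : ∫ v : ℝ, Real.exp (-(x - (x + v)) ^ 2 / t) * (f x - f (x + v))
          = ∫ y : ℝ, Real.exp (-(x - y) ^ 2 / t) * (f x - f y) :=
        integral_add_left_eq_self (fun y : ℝ => Real.exp (-(x - y) ^ 2 / t) * (f x - f y)) x
      rw [h2] at h1
      have h3 : ∀ u : ℝ, Real.exp (-(x - (x + s * u)) ^ 2 / t) * (f x - f (x + s * u))
          = Real.exp (-u ^ 2) * (f x - f (x + s * u)) := by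
        intro u
        congr 2
        rw [show (x - (x + s * u)) ^ 2 = t * u ^ 2 by rw [← hss]; ring]
        field_simp
      rw [show (∫ u : ℝ, Real.exp (-u ^ 2) * (f x - f (x + s * u)))
          = ∫ u : ℝ, Real.exp (-(x - (x + s * u)) ^ 2 / t) * (f x - f (x + s * u)) from by
            congr 1; funext u; rw [h3 u]]
      rw [h1, abs_of_pos (inv_pos.mpr hs0), smul_eq_mul]
      field_simp
    -- symmetrization
    have hint1 : Integrable (fun u : ℝ => Real.exp (-u ^ 2) * (f x - f (x + s * u))) := hInt s
    have hint2 : Integrable (fun u : ℝ => Real.exp (-u ^ 2) * (f x - f (x - s * u))) := by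
      refine (hInt (-s)).congr (ae_of_all _ fun u => ?_)
      simp only [show x + -s * u = x - s * u from by ring]
    have hsym : ∫ u : ℝ, Real.exp (-u ^ 2) * (f x - f (x + s * u))
        = ∫ u : ℝ, Real.exp (-u ^ 2) * (f x - f (x - s * u)) := by
      rw [← integral_neg_eq_self (fun u : ℝ => Real.exp (-u ^ 2) * (f x - f (x - s * u)))]
      congr 1; funext u
      rw [show x - s * -u = x + s * u by ring, neg_sq]
    have hhalf : ∫ u : ℝ, Real.exp (-u ^ 2) * (f x - f (x + s * u))
        = (1 / 2) * ((∫ u : ℝ, Real.exp (-u ^ 2) * (f x - f (x + s * u)))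
            + ∫ u : ℝ, Real.exp (-u ^ 2) * (f x - f (x - s * u))) := by
      rw [← hsym]; ring
    -- assemble
    have hsplit : ∫ u : ℝ, F t u
        = (1 / (2 * t)) * ((∫ u : ℝ, Real.exp (-u ^ 2) * (f x - f (x + s * u)))
            + ∫ u : ℝ, Real.exp (-u ^ 2) * (f x - f (x - s * u))) := by
      rw [← integral_add hint1 hint2]
      rw [← integral_const_mul]
      congr 1; funext u
      simp only [hF, ← hs]
      field_simp
      ring
    rw [hsub, hsplit, ← hsym]
    have h2I : (∫ u : ℝ, Real.exp (-u ^ 2) * (f x - f (x + s * u)))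
        + (∫ u : ℝ, Real.exp (-u ^ 2) * (f x - f (x + s * u)))
        = 2 * ∫ u : ℝ, Real.exp (-u ^ 2) * (f x - f (x + s * u)) := by ring
    rw [h2I]
    rw [div_mul_eq_mul_div, div_mul_eq_mul_div, one_mul, one_mul]
    rw [mul_comm t s]
    rw [mul_div_mul_left _ _ hsne, mul_div_mul_left _ _ (by norm_num : (2:ℝ) ≠ 0)]
  -- pointwise limit
  have hlim : ∀ u : ℝ, Tendsto (fun t : ℝ => F t u) (nhdsWithin 0 (Set.Ioi 0)) (nhds (L u)) := by
    intro u
    have hsq0 : Tendsto Real.sqrt (nhdsWithin (0:ℝ) (Set.Ioi 0)) (nhds 0) := by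
      have h := (Real.continuous_sqrt.tendsto 0).mono_left
        (nhdsWithin_le_nhds : nhdsWithin (0:ℝ) (Set.Ioi 0) ≤ nhds 0)
      simpa using h
    have h0 : Tendsto (fun t : ℝ => F t u - L u) (nhdsWithin 0 (Set.Ioi 0)) (nhds 0) := by
      refine squeeze_zero_norm' (a := fun t : ℝ => Real.exp (-u ^ 2) * (M * |u| ^ 3) * Real.sqrt t) ?_ ?_
      · filter_upwards [self_mem_nhdsWithin] with t ht
        rw [Real.norm_eq_abs]
        exact hdiff t ht u
      · simpa using (hsq0.const_mul (Real.exp (-u ^ 2) * (M * |u| ^ 3)))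
    have := h0.add (tendsto_const_nhds (x := L u))
    simpa using this
  -- dominated convergence
  have hbint : Integrable (fun u : ℝ =>
      Real.exp (-u ^ 2) * (|c2| * u ^ 2 / 2 + M * (u ^ 2 + u ^ 4))) := by
    have h := ((integrable_sq_gauss.const_mul (|c2| / 2 + M))).add
      (integrable_quartic_gauss.const_mul M)
    exact h.congr (ae_of_all _ fun u => by simp only [Pi.add_apply]; ring)
  have hmain : Tendsto (fun t : ℝ => ∫ u : ℝ, F t u) (nhdsWithin 0 (Set.Ioi 0))
      (nhds (∫ u : ℝ, L u)) := by
    apply tendsto_integral_filter_of_dominated_convergence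
      (fun u : ℝ => Real.exp (-u ^ 2) * (|c2| * u ^ 2 / 2 + M * (u ^ 2 + u ^ 4)))
    · filter_upwards [self_mem_nhdsWithin] with t ht
      apply Continuous.aestronglyMeasurable
      simp only [hF]
      fun_prop
    · filter_upwards [Ioo_mem_nhdsGT_of_mem
        (by norm_num : (0:ℝ) ∈ Set.Ico (0:ℝ) (1:ℝ))] with t ht
      refine ae_of_all _ fun u => ?_
      have ht0 : 0 < t := ht.1
      have ht1 : t ≤ 1 := ht.2.le
      have hst : Real.sqrt t ≤ 1 := by
        rw [show (1:ℝ) = Real.sqrt 1 by rw [Real.sqrt_one]]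
        exact Real.sqrt_le_sqrt ht1
      have hd := hdiff t ht0 u
      have hLb : |L u| = Real.exp (-u ^ 2) * (|c2| * u ^ 2 / 2) := by
        simp only [hL]
        rw [abs_mul, abs_of_pos (Real.exp_pos _), abs_div, abs_mul, abs_neg,
          abs_of_nonneg (sq_nonneg u)]
        norm_num
      have htri : |F t u| ≤ |L u| + |F t u - L u| := by
        have := abs_add_le (L u) (F t u - L u)
        simpa using this
      rw [Real.norm_eq_abs]
      have hb2 : Real.exp (-u ^ 2) * (M * |u| ^ 3) * Real.sqrt t
          ≤ Real.exp (-u ^ 2) * (M * (u ^ 2 + u ^ 4)) := by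
        have h1 : Real.exp (-u ^ 2) * (M * |u| ^ 3) * Real.sqrt t
            ≤ Real.exp (-u ^ 2) * (M * |u| ^ 3) * 1 :=
          mul_le_mul_of_nonneg_left hst (by positivity)
        refine h1.trans ?_
        rw [mul_one]
        exact mul_le_mul_of_nonneg_left
          (mul_le_mul_of_nonneg_left (habs3 u) hM0) (Real.exp_pos _).le
      calc |F t u| ≤ |L u| + |F t u - L u| := htri
        _ ≤ Real.exp (-u ^ 2) * (|c2| * u ^ 2 / 2)
            + Real.exp (-u ^ 2) * (M * (u ^ 2 + u ^ 4)) := by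
              rw [hLb]; exact add_le_add le_rfl (hd.trans hb2)
        _ = Real.exp (-u ^ 2) * (|c2| * u ^ 2 / 2 + M * (u ^ 2 + u ^ 4)) := by ring
    · exact hbint
    · exact ae_of_all _ hlim
  have hLval : ∫ u : ℝ, L u = -(Real.sqrt Real.pi / 4) * c2 := by
    have h : (fun u : ℝ => L u) = fun u : ℝ => (-c2 / 2) * (u ^ 2 * Real.exp (-u ^ 2)) := by
      funext u; simp only [hL]; ring
    rw [h, integral_const_mul, integral_sq_gauss]
    ring
  rw [show iteratedDeriv 2 f x = c2 from hiter2, ← hLval]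
  exact hmain.congr' (by
    filter_upwards [self_mem_nhdsWithin] with t ht
    exact (key_eq t ht).symm) |>.mono_right le_rfl
end

section
/- Let f : [0,1] \to \mathbb{R} be continuously differentiable. Define the quadratic-form functional E_t(f) = \frac{1}{2t^{3/2}} \int_0^1 \int_0^1 e^{-(x-y)^2/t} (f(x) - f(y))^2 \, dy \, dx for t > 0. Then \lim_{t \to 0^+} E_t(f) = \frac{\sqrt{\pi}}{4} \int_0^1 f'(x)^2 \, dx. -/
set_option maxHeartbeats 4000000
open MeasureTheory Real Filter intervalIntegral

lemma pointF_bound (u : ℝ) : Real.exp (-u^2) * u^2 ≤ 2 * Real.exp (-(1/2) * u^2) := by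
  have h1 : u^2/2 ≤ Real.exp (u^2/2) := le_trans (by linarith [sq_nonneg u]) (Real.add_one_le_exp _)
  have h2 : Real.exp (-u^2) = Real.exp (-(1/2)*u^2) * Real.exp (-(1/2)*u^2) := by
    rw [← Real.exp_add]; ring_nf
  rw [h2]
  have h3 : Real.exp (-(1/2)*u^2) * u^2 ≤ 2 := by
    have : Real.exp (-(1/2)*u^2) = (Real.exp (u^2/2))⁻¹ := by
      rw [← Real.exp_neg]; ring_nf
    rw [this]
    rw [inv_mul_le_iff₀ (Real.exp_pos _)]
    nlinarith [Real.exp_pos (u^2/2)]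
  nlinarith [Real.exp_pos (-(1/2)*u^2), sq_nonneg u]

lemma integrableF : Integrable (fun u : ℝ => Real.exp (-u^2) * u^2) := by
  apply Integrable.mono' ((integrable_exp_neg_mul_sq (b := 1/2) (by norm_num)).const_mul 2)
  · exact (Continuous.mul (by continuity) (by continuity)).aestronglyMeasurable
  · filter_upwards with u
    rw [Real.norm_eq_abs, abs_of_nonneg (by positivity)]
    exact pointF_bound u

lemma intF : ∫ u : ℝ, Real.exp (-u^2) * u^2 = Real.sqrt Real.pi / 2 := by
  -- integration by parts on [-b, b], then b → ∞
  have key : ∀ b : ℝ, ∫ u in (-b)..b, Real.exp (-u^2) * u^2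
      = -(b * Real.exp (-b^2)) + (1/2) * ∫ u in (-b)..b, Real.exp (-u^2) := by
    intro b
    have hv : ∀ x : ℝ, HasDerivAt (fun x : ℝ => -Real.exp (-x^2)/2) (x * Real.exp (-x^2)) x := by
      intro x
      have : HasDerivAt (fun x : ℝ => -x^2) (-(2*x)) x := by
        simpa using ((hasDerivAt_pow 2 x).fun_neg)
      have := (this.exp).fun_neg.div_const 2
      exact this.congr_deriv (by ring)
    have hu : ∀ x : ℝ, HasDerivAt (fun x : ℝ => x) 1 x := fun x => hasDerivAt_id x
    have ibp := intervalIntegral.integral_mul_deriv_eq_deriv_mul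
      (a := -b) (b := b) (u := fun x : ℝ => x) (u' := fun _ => (1:ℝ))
      (v := fun x : ℝ => -Real.exp (-x^2)/2) (v' := fun x => x * Real.exp (-x^2))
      (fun x _ => hu x) (fun x _ => hv x)
      (continuous_const.intervalIntegrable _ _)
      (by apply Continuous.intervalIntegrable; continuity)
    have e1 : ∫ u in (-b)..b, Real.exp (-u^2) * u^2 = ∫ x in (-b)..b, x * (x * Real.exp (-x^2)) := by
      apply intervalIntegral.integral_congr; intro x _; ring
    rw [e1, ibp]
    have e2 : ∫ x in (-b)..b, 1 * (-Real.exp (-x^2)/2) = -(1/2) * ∫ x in (-b)..b, Real.exp (-x^2) := by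
      rw [← intervalIntegral.integral_const_mul]
      apply intervalIntegral.integral_congr; intro x _; ring
    rw [e2]
    generalize (∫ x in (-b)..b, Real.exp (-x^2)) = I
    ring
  have lim1 : Tendsto (fun b : ℝ => ∫ u in (-b)..b, Real.exp (-u^2) * u^2) atTop
      (nhds (∫ u : ℝ, Real.exp (-u^2) * u^2)) :=
    intervalIntegral_tendsto_integral integrableF tendsto_neg_atTop_atBot tendsto_id
  have lim2 : Tendsto (fun b : ℝ => ∫ u in (-b)..b, Real.exp (-u^2)) atTop
      (nhds (Real.sqrt Real.pi)) := by
    have hi : Integrable (fun u : ℝ => Real.exp (-u^2)) := by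
      simpa using integrable_exp_neg_mul_sq (b := 1) one_pos
    have := intervalIntegral_tendsto_integral hi tendsto_neg_atTop_atBot tendsto_id
    have hval : ∫ u : ℝ, Real.exp (-u^2) = Real.sqrt Real.pi := by
      have := integral_gaussian 1
      simpa using this
    rwa [hval] at this
  have lim3 : Tendsto (fun b : ℝ => b * Real.exp (-b^2)) atTop (nhds 0) := by
    apply squeeze_zero' (g := fun b : ℝ => b * Real.exp (-b))
    · filter_upwards [eventually_ge_atTop (0:ℝ)] with b hb
      positivity
    · filter_upwards [eventually_ge_atTop (1:ℝ)] with b hb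
      have : Real.exp (-b^2) ≤ Real.exp (-b) := by
        apply Real.exp_le_exp.2; nlinarith
      nlinarith [Real.exp_pos (-b^2)]
    · simpa using Real.tendsto_pow_mul_exp_neg_atTop_nhds_zero 1
  have lim4 : Tendsto (fun b : ℝ => -(b * Real.exp (-b^2)) + (1/2) * ∫ u in (-b)..b, Real.exp (-u^2))
      atTop (nhds (Real.sqrt Real.pi / 2)) := by
    have := (lim3.neg).add (lim2.const_mul (1/2))
    simpa [div_eq_mul_inv, mul_comm] using this
  have : Tendsto (fun b : ℝ => ∫ u in (-b)..b, Real.exp (-u^2) * u^2) atTop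
      (nhds (Real.sqrt Real.pi / 2)) := by
    simpa only [key] using lim4
  exact tendsto_nhds_unique lim1 this

lemma cov (t x : ℝ) (ht : 0 < t) :
    ∫ y in (0:ℝ)..1, Real.exp (-(x - y) ^ 2 / t) * (x - y) ^ 2
      = t * Real.sqrt t *
        ∫ u in (x-1)/Real.sqrt t..x/Real.sqrt t, Real.exp (-u^2) * u^2 := by
  have hs : (0:ℝ) < Real.sqrt t := Real.sqrt_pos.2 ht
  have hs' : Real.sqrt t ≠ 0 := hs.ne'
  have hts : Real.sqrt t * Real.sqrt t = t := Real.mul_self_sqrt ht.le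
  have e1 : ∫ y in (0:ℝ)..1, Real.exp (-(x - y) ^ 2 / t) * (x - y) ^ 2
      = ∫ z in (x-1)..x, Real.exp (-z ^ 2 / t) * z ^ 2 := by
    have := intervalIntegral.integral_comp_sub_left
      (a := (0:ℝ)) (b := 1) (fun z => Real.exp (-z ^ 2 / t) * z ^ 2) x
    simpa using this
  have e2 := intervalIntegral.integral_comp_mul_left
    (a := (x-1)/Real.sqrt t) (b := x/Real.sqrt t)
    (fun z => Real.exp (-z ^ 2 / t) * z ^ 2) hs'
  rw [mul_div_cancel₀ _ hs', mul_div_cancel₀ _ hs'] at e2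
  have e3 : ∀ u : ℝ, Real.exp (-(Real.sqrt t * u) ^ 2 / t) * (Real.sqrt t * u) ^ 2
      = t * (Real.exp (-u^2) * u^2) := by
    intro u
    have : (Real.sqrt t * u) ^ 2 = t * u ^ 2 := by
      rw [mul_pow]; rw [sq, hts]
    rw [this]
    have : -(t * u ^ 2) / t = -u ^ 2 := by field_simp
    rw [this]; ring
  simp only [e3] at e2
  rw [intervalIntegral.integral_const_mul] at e2
  rw [e1]
  rw [smul_eq_mul, inv_mul_eq_div, eq_div_iff hs'] at e2
  rw [← e2]
  ring

lemma hF_nonneg' {a b : ℝ} (hab : a ≤ b) : (0:ℝ) ≤ ∫ u in a..b, Real.exp (-u^2) * u^2 :=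
  intervalIntegral.integral_nonneg hab (fun u _ => by positivity)

lemma hF_le {a b : ℝ} (hab : a ≤ b) :
    ∫ u in a..b, Real.exp (-u^2) * u^2 ≤ Real.sqrt Real.pi / 2 := by
  rw [intervalIntegral.integral_of_le hab, ← intF]
  apply setIntegral_le_integral integrableF
  filter_upwards with u using by positivity

lemma sqrt_tendsto : Tendsto Real.sqrt (nhdsWithin 0 (Set.Ioi 0)) (nhdsWithin 0 (Set.Ioi 0)) := by
  apply tendsto_nhdsWithin_of_tendsto_nhds_of_eventually_within
  · have : Tendsto Real.sqrt (nhds 0) (nhds (Real.sqrt 0)) :=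
      Real.continuous_sqrt.continuousAt
    simpa using this.mono_left nhdsWithin_le_nhds
  · filter_upwards [self_mem_nhdsWithin] with t (ht : t ∈ Set.Ioi 0)
    exact Real.sqrt_pos.2 ht

lemma h_tendsto (x : ℝ) (hx : x ∈ Set.Ioo (0:ℝ) 1) :
    Tendsto (fun t => ∫ u in (x-1)/Real.sqrt t..x/Real.sqrt t, Real.exp (-u^2) * u^2)
      (nhdsWithin 0 (Set.Ioi 0)) (nhds (Real.sqrt Real.pi / 2)) := by
  have hinv : Tendsto (fun t : ℝ => (Real.sqrt t)⁻¹) (nhdsWithin 0 (Set.Ioi 0)) atTop :=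
    tendsto_inv_nhdsGT_zero.comp sqrt_tendsto
  have hb : Tendsto (fun t : ℝ => x / Real.sqrt t) (nhdsWithin 0 (Set.Ioi 0)) atTop := by
    simp only [div_eq_mul_inv]
    exact hinv.const_mul_atTop hx.1
  have ha : Tendsto (fun t : ℝ => (x-1) / Real.sqrt t) (nhdsWithin 0 (Set.Ioi 0)) atBot := by
    simp only [div_eq_mul_inv]
    apply Tendsto.const_mul_atTop_of_neg (by linarith [hx.2] : x - 1 < 0) hinv
  rw [← intF]
  exact intervalIntegral_tendsto_integral integrableF ha hb

noncomputable def Hh (t x : ℝ) : ℝ :=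
  ∫ u in (x-1)/Real.sqrt t..x/Real.sqrt t, Real.exp (-u^2) * u^2

lemma Hh_bds {t : ℝ} (ht : 0 < t) (x : ℝ) : (x-1)/Real.sqrt t ≤ x/Real.sqrt t := by
  exact div_le_div_of_nonneg_right (by linarith) (Real.sqrt_nonneg t)

lemma Hh_nonneg {t : ℝ} (ht : 0 < t) (x : ℝ) : 0 ≤ Hh t x := hF_nonneg' (Hh_bds ht x)

lemma Hh_le {t : ℝ} (ht : 0 < t) (x : ℝ) : Hh t x ≤ Real.sqrt Real.pi / 2 := hF_le (Hh_bds ht x)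


lemma Hh_cont {t : ℝ} (ht : 0 < t) : Continuous (fun x => Hh t x) := by
  have hP : Continuous (fun b => ∫ u in (0:ℝ)..b, Real.exp (-u^2) * u^2) :=
    intervalIntegral.continuous_primitive (fun a b => integrableF.intervalIntegrable) 0
  have heq : ∀ x : ℝ, Hh t x = (∫ u in (0:ℝ)..x/Real.sqrt t, Real.exp (-u^2) * u^2)
      - ∫ u in (0:ℝ)..(x-1)/Real.sqrt t, Real.exp (-u^2) * u^2 := by
    intro x
    rw [intervalIntegral.integral_interval_sub_left
      integrableF.intervalIntegrable integrableF.intervalIntegrable]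
    rfl
  simp only [heq]
  exact (hP.comp (by continuity)).sub (hP.comp (by continuity))

theorem regularizer_limit (f : ℝ → ℝ) (hf : ContDiff ℝ 1 f) :
    Tendsto (fun t : ℝ =>
        (1 / (2 * t * Real.sqrt t)) *
          ∫ x in (0:ℝ)..1, ∫ y in (0:ℝ)..1,
            Real.exp (-(x - y) ^ 2 / t) * (f x - f y) ^ 2)
      (nhdsWithin 0 (Set.Ioi 0))
      (nhds ((Real.sqrt Real.pi / 4) * ∫ x in (0:ℝ)..1, (deriv f x) ^ 2)) := by
  have hfc : Continuous f := hf.continuous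
  set g : ℝ → ℝ := deriv f with hgdef
  have hg : Continuous g := hf.continuous_deriv le_rfl
  obtain ⟨M0, hM0⟩ :=
    (isCompact_Icc (a := (0:ℝ)) (b := 1)).exists_bound_of_continuousOn hg.continuousOn
  set M : ℝ := max M0 1 with hMdef
  have hM1 : (1:ℝ) ≤ M := le_max_right _ _
  have hMpos : (0:ℝ) < M := lt_of_lt_of_le one_pos hM1
  have hgM : ∀ s ∈ Set.Icc (0:ℝ) 1, |g s| ≤ M := fun s hs =>
    le_trans (by simpa using hM0 s hs) (le_max_left _ _)
  have hderiv : ∀ s : ℝ, HasDerivAt f (g s) s := fun s =>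
    (hf.differentiable one_ne_zero s).hasDerivAt
  have hftc : ∀ x y : ℝ, ∫ s in y..x, g s = f x - f y := fun x y =>
    intervalIntegral.integral_eq_sub_of_hasDerivAt (fun s _ => hderiv s)
      (hg.intervalIntegrable _ _)
  -- Lipschitz bound
  have hlip : ∀ x ∈ Set.Icc (0:ℝ) 1, ∀ y ∈ Set.Icc (0:ℝ) 1,
      |f x - f y| ≤ M * |x - y| := by
    intro x hx y hy
    rw [← hftc x y, ← Real.norm_eq_abs]
    have h := intervalIntegral.norm_integral_le_of_norm_le_const (a := y) (b := x) (C := M)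
      (f := g) ?_
    · simpa [abs_sub_comm] using h
    · intro s hs
      rw [Real.norm_eq_abs]
      apply hgM
      exact Set.uIcc_subset_Icc hy hx (Set.uIoc_subset_uIcc hs)
  -- the A-part
  set A : ℝ → ℝ := fun t => (1/2) * ∫ x in (0:ℝ)..1, g x ^ 2 * Hh t x with hAdef
  set Φ : ℝ → ℝ := fun t : ℝ =>
        (1 / (2 * t * Real.sqrt t)) *
          ∫ x in (0:ℝ)..1, ∫ y in (0:ℝ)..1,
            Real.exp (-(x - y) ^ 2 / t) * (f x - f y) ^ 2 with hΦdef
  have tendstoA : Tendsto A (nhdsWithin 0 (Set.Ioi 0))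
      (nhds ((Real.sqrt Real.pi / 4) * ∫ x in (0:ℝ)..1, g x ^ 2)) := by
    have key : Tendsto (fun t => ∫ x in Set.Ioc (0:ℝ) 1, g x ^ 2 * Hh t x)
        (nhdsWithin 0 (Set.Ioi 0))
        (nhds (∫ x in Set.Ioc (0:ℝ) 1, g x ^ 2 * (Real.sqrt Real.pi / 2))) := by
      apply MeasureTheory.tendsto_integral_filter_of_dominated_convergence
        (bound := fun x => g x ^ 2 * (Real.sqrt Real.pi / 2))
      · filter_upwards [self_mem_nhdsWithin] with t ht
        exact (((hg.pow 2).mul (Hh_cont ht)).aestronglyMeasurable).restrict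
      · filter_upwards [self_mem_nhdsWithin] with t ht
        apply Eventually.of_forall
        intro x
        rw [Real.norm_eq_abs, abs_mul, abs_of_nonneg (Hh_nonneg ht x), abs_of_nonneg (by positivity)]
        exact mul_le_mul_of_nonneg_left (Hh_le ht x) (by positivity)
      · exact ((hg.pow 2).mul continuous_const).integrableOn_Icc.mono_set Set.Ioc_subset_Icc_self
      · have hIoo : ∀ᵐ x ∂(volume.restrict (Set.Ioc (0:ℝ) 1)), x ∈ Set.Ioo (0:ℝ) 1 := by
          have h1 : ∀ᵐ x ∂(volume.restrict (Set.Ioc (0:ℝ) 1)), x ∈ Set.Ioc (0:ℝ) 1 :=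
            ae_restrict_mem measurableSet_Ioc
          have h2 : ∀ᵐ x : ℝ ∂(volume.restrict (Set.Ioc (0:ℝ) 1)), x ≠ 1 := by
            apply ae_restrict_of_ae
            rw [ae_iff]
            simpa using Real.volume_singleton (x := 1)
          filter_upwards [h1, h2] with x hx1 hx2
          exact ⟨hx1.1, lt_of_le_of_ne hx1.2 hx2⟩
        filter_upwards [hIoo] with x hx
        exact (h_tendsto x hx).const_mul _
    have e1 : ∀ t : ℝ, A t = (1/2) * ∫ x in Set.Ioc (0:ℝ) 1, g x ^ 2 * Hh t x := by
      intro t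
      show (1/2) * ∫ x in (0:ℝ)..1, g x ^ 2 * Hh t x
          = (1/2) * ∫ x in Set.Ioc (0:ℝ) 1, g x ^ 2 * Hh t x
      rw [intervalIntegral.integral_of_le zero_le_one]
    have e2 : (1/2) * ∫ x in Set.Ioc (0:ℝ) 1, g x ^ 2 * (Real.sqrt Real.pi / 2)
        = (Real.sqrt Real.pi / 4) * ∫ x in (0:ℝ)..1, g x ^ 2 := by
      rw [intervalIntegral.integral_of_le zero_le_one, MeasureTheory.integral_mul_const]
      ring
    rw [← e2]
    exact (key.const_mul _).congr (fun t => (e1 t).symm)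
  -- uniform continuity of g on [0,1]
  have hUC : ∀ ε : ℝ, 0 < ε → ∃ δ : ℝ, 0 < δ ∧ ∀ a ∈ Set.Icc (0:ℝ) 1, ∀ b ∈ Set.Icc (0:ℝ) 1,
      |a - b| ≤ δ → |g a - g b| ≤ ε := by
    intro ε hε
    have huc := (isCompact_Icc (a := (0:ℝ)) (b := 1)).uniformContinuousOn_of_continuous
      hg.continuousOn
    rw [Metric.uniformContinuousOn_iff] at huc
    obtain ⟨δ, hδpos, hδ⟩ := huc ε hε
    refine ⟨δ/2, by linarith, fun a ha b hb hab => ?_⟩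
    have hd : dist a b < δ := by rw [Real.dist_eq]; linarith
    have := hδ a ha b hb hd
    rw [Real.dist_eq] at this
    exact this.le
  -- Taylor estimate
  have htay : ∀ ε δ : ℝ,
      (∀ a ∈ Set.Icc (0:ℝ) 1, ∀ b ∈ Set.Icc (0:ℝ) 1, |a - b| ≤ δ → |g a - g b| ≤ ε) →
      ∀ x ∈ Set.Icc (0:ℝ) 1, ∀ y ∈ Set.Icc (0:ℝ) 1, |x - y| ≤ δ →
      |f x - f y - g x * (x - y)| ≤ ε * |x - y| := by
    intro ε δ hδ x hx y hy hxy
    have e : f x - f y - g x * (x - y) = ∫ s in y..x, (g s - g x) := by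
      rw [intervalIntegral.integral_sub (hg.intervalIntegrable _ _)
        (intervalIntegrable_const), hftc x y, intervalIntegral.integral_const,
        smul_eq_mul]
      ring
    rw [e, ← Real.norm_eq_abs]
    have h := intervalIntegral.norm_integral_le_of_norm_le_const (a := y) (b := x) (C := ε)
      (f := fun s => g s - g x) ?_
    · simpa [abs_sub_comm] using h
    · intro s hs
      rw [Real.norm_eq_abs]
      have hsI : s ∈ Set.Icc (0:ℝ) 1 := Set.uIcc_subset_Icc hy hx (Set.uIoc_subset_uIcc hs)
      apply hδ s hsI x hx
      obtain ⟨hxy1, hxy2⟩ := abs_le.1 hxy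
      rcases Set.mem_uIoc.mp hs with ⟨h1, h2⟩ | ⟨h1, h2⟩ <;>
        exact abs_le.2 ⟨by linarith, by linarith⟩
  -- core estimate
  have est : ∀ ε' δ : ℝ, 0 < ε' → 0 < δ →
      (∀ a ∈ Set.Icc (0:ℝ) 1, ∀ b ∈ Set.Icc (0:ℝ) 1, |a - b| ≤ δ → |g a - g b| ≤ ε') →
      ∀ t : ℝ, 0 < t →
      |Φ t - A t| ≤ Real.sqrt Real.pi / 2 * M * ε'
        + Real.sqrt 2 * Real.sqrt Real.pi * M ^ 2 * Real.exp (-δ^2/(2*t)) := by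
    intro ε' δ hε' hδpos hδ t ht
    have hs : (0:ℝ) < Real.sqrt t := Real.sqrt_pos.2 ht
    have hts : Real.sqrt t * Real.sqrt t = t := Real.mul_self_sqrt ht.le
    have h2t : (0:ℝ) < 2 * t := by linarith
    have hEx : Real.sqrt (2*t) = Real.sqrt 2 * Real.sqrt t := Real.sqrt_mul (by norm_num) t
    -- continuity facts
    have hq1 : Continuous (Function.uncurry fun x y : ℝ =>
        Real.exp (-(x - y) ^ 2 / t) * (f x - f y) ^ 2) := by
      apply Continuous.mul
      · fun_prop
      · fun_prop
    have hq2 : Continuous (Function.uncurry fun x y : ℝ =>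
        Real.exp (-(x - y) ^ 2 / t) * (g x ^ 2 * (x - y) ^ 2)) := by
      apply Continuous.mul
      · fun_prop
      · fun_prop
    have hcont1 : Continuous (fun x => ∫ y in (0:ℝ)..1,
        Real.exp (-(x - y) ^ 2 / t) * (f x - f y) ^ 2) :=
      intervalIntegral.continuous_parametric_intervalIntegral_of_continuous' hq1 0 1
    have hcont2 : Continuous (fun x => ∫ y in (0:ℝ)..1,
        Real.exp (-(x - y) ^ 2 / t) * (g x ^ 2 * (x - y) ^ 2)) :=
      intervalIntegral.continuous_parametric_intervalIntegral_of_continuous' hq2 0 1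
    -- inner integral of the model term
    have hinner2 : ∀ x : ℝ, ∫ y in (0:ℝ)..1, Real.exp (-(x - y) ^ 2 / t) * (g x ^ 2 * (x - y) ^ 2)
        = g x ^ 2 * (t * Real.sqrt t * Hh t x) := by
      intro x
      have e : (fun y => Real.exp (-(x - y) ^ 2 / t) * (g x ^ 2 * (x - y) ^ 2))
          = fun y => g x ^ 2 * (Real.exp (-(x - y) ^ 2 / t) * (x - y) ^ 2) := by
        funext y; ring
      rw [e, intervalIntegral.integral_const_mul, cov t x ht]
      rfl
    -- A as a double integral
    have hA : A t = (1 / (2 * t * Real.sqrt t)) * ∫ x in (0:ℝ)..1, ∫ y in (0:ℝ)..1,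
        Real.exp (-(x - y) ^ 2 / t) * (g x ^ 2 * (x - y) ^ 2) := by
      rw [intervalIntegral.integral_congr (g := fun x => g x ^ 2 * (t * Real.sqrt t * Hh t x))
        (fun x _ => hinner2 x)]
      have e : (fun x => g x ^ 2 * (t * Real.sqrt t * Hh t x))
          = fun x => (t * Real.sqrt t) * (g x ^ 2 * Hh t x) := by funext x; ring
      rw [e, intervalIntegral.integral_const_mul]
      show A t = 1 / (2 * t * Real.sqrt t) * (t * Real.sqrt t * ∫ x in (0:ℝ)..1, g x ^ 2 * Hh t x)
      rw [hAdef]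
      have hne : t * Real.sqrt t ≠ 0 := by positivity
      field_simp
    -- difference as a single double integral
    have hdiff : Φ t - A t = (1 / (2 * t * Real.sqrt t)) * ∫ x in (0:ℝ)..1,
        ((∫ y in (0:ℝ)..1, Real.exp (-(x - y) ^ 2 / t) * (f x - f y) ^ 2)
          - ∫ y in (0:ℝ)..1, Real.exp (-(x - y) ^ 2 / t) * (g x ^ 2 * (x - y) ^ 2)) := by
      rw [hA, hΦdef]
      rw [intervalIntegral.integral_sub (hcont1.intervalIntegrable _ _)
        (hcont2.intervalIntegrable _ _)]
      ring
    -- pointwise bound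
    have hpt : ∀ x ∈ Set.Icc (0:ℝ) 1, ∀ y ∈ Set.Icc (0:ℝ) 1,
        |Real.exp (-(x - y) ^ 2 / t) * (f x - f y) ^ 2
          - Real.exp (-(x - y) ^ 2 / t) * (g x ^ 2 * (x - y) ^ 2)|
        ≤ 2*M*ε' * (Real.exp (-(x - y) ^ 2 / t) * (x - y) ^ 2)
          + 2*M^2*Real.exp (-δ^2/(2*t)) * (Real.exp (-(x - y) ^ 2 / (2*t)) * (x - y) ^ 2) := by
      intro x hx y hy
      have hr : Real.exp (-(x - y) ^ 2 / t) * (f x - f y) ^ 2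
          - Real.exp (-(x - y) ^ 2 / t) * (g x ^ 2 * (x - y) ^ 2)
          = Real.exp (-(x - y) ^ 2 / t) * ((f x - f y) ^ 2 - g x ^ 2 * (x - y) ^ 2) := by ring
      rw [hr, abs_mul, abs_of_nonneg (Real.exp_pos _).le]
      have hflip : |f x - f y| ≤ M * |x - y| := hlip x hx y hy
      have hgx : |g x| ≤ M := hgM x hx
      by_cases hcase : |x - y| ≤ δ
      · have a1 : |f x - f y - g x * (x - y)| ≤ ε' * |x - y| := htay ε' δ hδ x hx y hy hcase
        have a2 : |f x - f y + g x * (x - y)| ≤ 2 * M * |x - y| := by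
          have h3 := abs_add_le (f x - f y) (g x * (x - y))
          rw [abs_mul] at h3
          nlinarith [abs_nonneg (x - y)]
        have h1 : |(f x - f y) ^ 2 - g x ^ 2 * (x - y) ^ 2| ≤ 2 * M * ε' * (x - y) ^ 2 := by
          have e : (f x - f y) ^ 2 - g x ^ 2 * (x - y) ^ 2
              = (f x - f y - g x * (x - y)) * (f x - f y + g x * (x - y)) := by ring
          rw [e, abs_mul]
          calc |f x - f y - g x * (x - y)| * |f x - f y + g x * (x - y)|
              ≤ (ε' * |x - y|) * (2 * M * |x - y|) :=
                mul_le_mul a1 a2 (abs_nonneg _) (by positivity)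
            _ = 2 * M * ε' * (|x - y| * |x - y|) := by ring
            _ = 2 * M * ε' * (x - y) ^ 2 := by rw [abs_mul_abs_self]; ring
        calc Real.exp (-(x - y) ^ 2 / t) * |(f x - f y) ^ 2 - g x ^ 2 * (x - y) ^ 2|
            ≤ Real.exp (-(x - y) ^ 2 / t) * (2 * M * ε' * (x - y) ^ 2) :=
              mul_le_mul_of_nonneg_left h1 (Real.exp_pos _).le
          _ = 2*M*ε' * (Real.exp (-(x - y) ^ 2 / t) * (x - y) ^ 2) := by ring
          _ ≤ _ := le_add_of_nonneg_right (by positivity)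
      · push_neg at hcase
        have hδsq : δ ^ 2 ≤ (x - y) ^ 2 := by nlinarith [sq_abs (x - y), abs_nonneg (x - y)]
        have h1 : |(f x - f y) ^ 2 - g x ^ 2 * (x - y) ^ 2| ≤ 2 * M ^ 2 * (x - y) ^ 2 := by
          have b1 : (f x - f y) ^ 2 ≤ M ^ 2 * (x - y) ^ 2 := by
            nlinarith [mul_self_le_mul_self (abs_nonneg (f x - f y)) hflip,
              abs_mul_abs_self (f x - f y), abs_mul_abs_self (x - y),
              abs_nonneg (x - y), hMpos]
          have hg2 : g x ^ 2 ≤ M ^ 2 := by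
            obtain ⟨hl, hr'⟩ := abs_le.1 hgx
            nlinarith
          have b2 : g x ^ 2 * (x - y) ^ 2 ≤ M ^ 2 * (x - y) ^ 2 :=
            mul_le_mul_of_nonneg_right hg2 (sq_nonneg _)
          have b3 : (0:ℝ) ≤ g x ^ 2 * (x - y) ^ 2 := by positivity
          have b4 : (0:ℝ) ≤ (f x - f y) ^ 2 := by positivity
          exact abs_le.2 ⟨by nlinarith, by nlinarith⟩
        have h2 : Real.exp (-(x - y) ^ 2 / t)
            ≤ Real.exp (-δ^2/(2*t)) * Real.exp (-(x - y) ^ 2 / (2*t)) := by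
          rw [← Real.exp_add]
          apply Real.exp_le_exp.2
          rw [← add_div, div_le_div_iff₀ ht h2t]
          nlinarith
        calc Real.exp (-(x - y) ^ 2 / t) * |(f x - f y) ^ 2 - g x ^ 2 * (x - y) ^ 2|
            ≤ (Real.exp (-δ^2/(2*t)) * Real.exp (-(x - y) ^ 2 / (2*t)))
              * (2 * M ^ 2 * (x - y) ^ 2) :=
              mul_le_mul h2 h1 (abs_nonneg _) (by positivity)
          _ = 2*M^2*Real.exp (-δ^2/(2*t)) * (Real.exp (-(x - y) ^ 2 / (2*t)) * (x - y) ^ 2) := by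
              ring
          _ ≤ _ := le_add_of_nonneg_left (by positivity)
    -- integrate the bound in y
    have hxbd : ∀ x ∈ Set.Icc (0:ℝ) 1,
        |(∫ y in (0:ℝ)..1, Real.exp (-(x - y) ^ 2 / t) * (f x - f y) ^ 2)
          - ∫ y in (0:ℝ)..1, Real.exp (-(x - y) ^ 2 / t) * (g x ^ 2 * (x - y) ^ 2)|
        ≤ 2*M*ε' * (t * Real.sqrt t * (Real.sqrt Real.pi / 2))
          + 2*M^2*Real.exp (-δ^2/(2*t))
            * (2 * t * Real.sqrt (2*t) * (Real.sqrt Real.pi / 2)) := by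
      intro x hx
      rw [← intervalIntegral.integral_sub (by apply Continuous.intervalIntegrable; fun_prop)
        (by apply Continuous.intervalIntegrable; fun_prop)]
      rw [← Real.norm_eq_abs]
      have hb := intervalIntegral.norm_integral_le_of_norm_le (a := (0:ℝ)) (b := 1)
        (f := fun y => Real.exp (-(x - y) ^ 2 / t) * (f x - f y) ^ 2
          - Real.exp (-(x - y) ^ 2 / t) * (g x ^ 2 * (x - y) ^ 2))
        (g := fun y => 2*M*ε' * (Real.exp (-(x - y) ^ 2 / t) * (x - y) ^ 2)
          + 2*M^2*Real.exp (-δ^2/(2*t)) * (Real.exp (-(x - y) ^ 2 / (2*t)) * (x - y) ^ 2))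
        (μ := volume) zero_le_one ?_ ?_
      · refine hb.trans ?_
        have hval : (∫ y in (0:ℝ)..1,
            (2*M*ε' * (Real.exp (-(x - y) ^ 2 / t) * (x - y) ^ 2)
            + 2*M^2*Real.exp (-δ^2/(2*t)) * (Real.exp (-(x - y) ^ 2 / (2*t)) * (x - y) ^ 2)))
            = 2*M*ε' * (t * Real.sqrt t * Hh t x)
              + 2*M^2*Real.exp (-δ^2/(2*t)) * (2 * t * Real.sqrt (2*t) * Hh (2*t) x) := by
          rw [intervalIntegral.integral_add (by apply Continuous.intervalIntegrable; fun_prop)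
            (by apply Continuous.intervalIntegrable; fun_prop),
            intervalIntegral.integral_const_mul, intervalIntegral.integral_const_mul,
            cov t x ht, cov (2*t) x h2t]
          rfl
        rw [hval]
        have hnn1 : 0 ≤ Hh t x := Hh_nonneg ht x
        have hnn2 : 0 ≤ Hh (2*t) x := Hh_nonneg h2t x
        have hle1 : Hh t x ≤ Real.sqrt Real.pi / 2 := Hh_le ht x
        have hle2 : Hh (2*t) x ≤ Real.sqrt Real.pi / 2 := Hh_le h2t x
        have hst2 : (0:ℝ) ≤ Real.sqrt (2*t) := Real.sqrt_nonneg _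
        gcongr
      · filter_upwards with y hy
        have hyI : y ∈ Set.Icc (0:ℝ) 1 := by
          exact Set.Ioc_subset_Icc_self hy
        rw [Real.norm_eq_abs]
        exact hpt x hx y hyI
      · apply Continuous.intervalIntegrable; fun_prop
    -- outer integral bound
    have houter : |∫ x in (0:ℝ)..1,
        ((∫ y in (0:ℝ)..1, Real.exp (-(x - y) ^ 2 / t) * (f x - f y) ^ 2)
          - ∫ y in (0:ℝ)..1, Real.exp (-(x - y) ^ 2 / t) * (g x ^ 2 * (x - y) ^ 2))|
        ≤ 2*M*ε' * (t * Real.sqrt t * (Real.sqrt Real.pi / 2))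
          + 2*M^2*Real.exp (-δ^2/(2*t))
            * (2 * t * Real.sqrt (2*t) * (Real.sqrt Real.pi / 2)) := by
      rw [← Real.norm_eq_abs]
      have h := intervalIntegral.norm_integral_le_of_norm_le_const (a := (0:ℝ)) (b := 1)
        (f := fun x => (∫ y in (0:ℝ)..1, Real.exp (-(x - y) ^ 2 / t) * (f x - f y) ^ 2)
          - ∫ y in (0:ℝ)..1, Real.exp (-(x - y) ^ 2 / t) * (g x ^ 2 * (x - y) ^ 2))
        (C := 2*M*ε' * (t * Real.sqrt t * (Real.sqrt Real.pi / 2))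
          + 2*M^2*Real.exp (-δ^2/(2*t))
            * (2 * t * Real.sqrt (2*t) * (Real.sqrt Real.pi / 2))) ?_
      · simpa using h
      · intro x hxI
        have hxIcc : x ∈ Set.Icc (0:ℝ) 1 := by
          rw [Set.uIoc_of_le zero_le_one] at hxI
          exact Set.Ioc_subset_Icc_self hxI
        rw [Real.norm_eq_abs]
        exact hxbd x hxIcc
    -- combine
    rw [hdiff, abs_mul]
    have hcpos : (0:ℝ) < 1 / (2 * t * Real.sqrt t) := by positivity
    rw [abs_of_nonneg hcpos.le]
    calc (1 / (2 * t * Real.sqrt t)) * |∫ x in (0:ℝ)..1, _|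
        ≤ (1 / (2 * t * Real.sqrt t)) *
          (2*M*ε' * (t * Real.sqrt t * (Real.sqrt Real.pi / 2))
          + 2*M^2*Real.exp (-δ^2/(2*t))
            * (2 * t * Real.sqrt (2*t) * (Real.sqrt Real.pi / 2))) :=
          mul_le_mul_of_nonneg_left houter hcpos.le
      _ = Real.sqrt Real.pi / 2 * M * ε'
          + Real.sqrt 2 * Real.sqrt Real.pi * M ^ 2 * Real.exp (-δ^2/(2*t)) := by
          rw [hEx]
          have hne : Real.sqrt t ≠ 0 := hs.ne'
          have htne : t ≠ 0 := ht.ne'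
          field_simp
  have tendstoD : Tendsto (fun t => Φ t - A t) (nhdsWithin 0 (Set.Ioi 0)) (nhds 0) := by
    rw [Metric.tendsto_nhds]
    intro ε hε
    simp only [Real.dist_eq, sub_zero]
    have hden : (0:ℝ) < Real.sqrt Real.pi * M + 1 := by positivity
    set ε' : ℝ := ε / (Real.sqrt Real.pi * M + 1) with hε'def
    have hε' : 0 < ε' := div_pos hε hden
    obtain ⟨δ, hδpos, hδ⟩ := hUC ε' hε'
    have half1 : Real.sqrt Real.pi / 2 * M * ε' ≤ ε / 2 := by
      have k1 : (Real.sqrt Real.pi * M) * ε' ≤ (Real.sqrt Real.pi * M + 1) * ε' := by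
        nlinarith [hε'.le]
      have k2 : (Real.sqrt Real.pi * M + 1) * ε' = ε := by
        rw [hε'def]; field_simp
      nlinarith
    have hexp : Tendsto (fun t : ℝ => Real.sqrt 2 * Real.sqrt Real.pi * M ^ 2
        * Real.exp (-δ^2/(2*t))) (nhdsWithin 0 (Set.Ioi 0)) (nhds 0) := by
      have h1 : Tendsto (fun t : ℝ => -δ^2/(2*t)) (nhdsWithin 0 (Set.Ioi 0)) atBot := by
        have h2 : Tendsto (fun t : ℝ => t⁻¹) (nhdsWithin 0 (Set.Ioi 0)) atTop :=
          tendsto_inv_nhdsGT_zero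
        have e : (fun t : ℝ => -δ^2/(2*t)) = fun t => (-δ^2/2) * t⁻¹ := by
          funext u
          rw [div_eq_mul_inv, mul_inv, div_eq_mul_inv]
          ring
        rw [e]
        exact h2.const_mul_atTop_of_neg (by nlinarith)
      have := (Real.tendsto_exp_atBot.comp h1).const_mul
        (Real.sqrt 2 * Real.sqrt Real.pi * M ^ 2)
      simpa using this
    have hev : ∀ᶠ t in nhdsWithin 0 (Set.Ioi 0), Real.sqrt 2 * Real.sqrt Real.pi * M ^ 2
        * Real.exp (-δ^2/(2*t)) < ε / 2 := hexp.eventually (gt_mem_nhds (by positivity))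
    filter_upwards [self_mem_nhdsWithin, hev] with t ht hlt
    have h := est ε' δ hε' hδpos hδ t ht
    calc |Φ t - A t| ≤ _ := h
      _ < ε := by linarith
  have := tendstoA.add tendstoD
  rw [add_zero] at this
  exact this.congr (fun t => by ring)
end

section
/- (McDiarmid's inequality) Let X_1, \ldots, X_n be independent random variables taking values in a measurable space, and let f be a real-valued function of n arguments satisfying the bounded differences condition: for each i, changing the i-th argument (with all others fixed) changes the value of f by at most c_i. Then for every \varepsilon > 0, P(|f(X_1, \ldots, X_n) - \mathbb{E}[f(X_1, \ldots, X_n)]| > \varepsilon) \le 2 \exp\left(-\frac{2\varepsilon^2}{\sum_{i=1}^n c_i^2}\right). -/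
open MeasureTheory ProbabilityTheory Real

lemma logMgfBound {p : ℝ} (hp0 : 0 ≤ p) (hp1 : p ≤ 1) (h : ℝ) :
    -(p*h) + Real.log (1 - p + p * Real.exp h) ≤ h^2/8 := by
  rcases hp0.eq_or_lt with rfl | hp
  · simp [Real.log_one]; positivity
  set D : ℝ → ℝ := fun x => 1 - p + p * Real.exp x with hD
  have hDpos : ∀ x, 0 < D x := fun x => by
    simp only [hD]
    have := mul_pos hp (Real.exp_pos x); linarith
  set L : ℝ → ℝ := fun x => -(p*x) + Real.log (D x) with hL
  set f1 : ℝ → ℝ := fun x => -p + p * Real.exp x / D x with hf1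
  set f2 : ℝ → ℝ := fun x => p * Real.exp x * (1-p) / (D x)^2 with hf2
  have hDd : ∀ x, HasDerivAt D (p * Real.exp x) x := fun x =>
    ((Real.hasDerivAt_exp x).const_mul p).const_add (1-p)
  have hLd : ∀ x, HasDerivAt L (f1 x) x := by
    intro x
    have h1 : HasDerivAt (fun y : ℝ => -(p*y)) (-p) x := by
      simpa using ((hasDerivAt_id x).const_mul p).fun_neg
    exact h1.add ((hDd x).log (hDpos x).ne')
  have hf1d : ∀ x, HasDerivAt f1 (f2 x) x := by
    intro x
    have h1 : HasDerivAt (fun y => p * Real.exp y) (p * Real.exp x) x :=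
      (Real.hasDerivAt_exp x).const_mul p
    have h2 := (h1.div (hDd x) (hDpos x).ne').const_add (-p)
    have heq : p * Real.exp x * D x - p * Real.exp x * (p * Real.exp x) = p * Real.exp x * (1-p) := by
      simp only [hD]; ring
    have : f2 x = (p * Real.exp x * D x - p * Real.exp x * (p * Real.exp x)) / D x ^ 2 := by
      rw [hf2, heq]
    rw [this]
    exact h2
  have hf2bdd : ∀ x, 0 ≤ f2 x ∧ f2 x ≤ 1/4 := by
    intro x
    have hu : 0 < p * Real.exp x := by positivity
    have hv : 0 ≤ 1 - p := by linarith
    have hDx : D x = p * Real.exp x + (1 - p) := by simp [hD]; ring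
    constructor
    · apply div_nonneg (by positivity) (by positivity)
    · rw [hf2, div_le_iff₀ (by positivity)]
      nlinarith [sq_nonneg (p * Real.exp x - (1-p))]
  set H : ℝ → ℝ := fun x => x/4 - f1 x with hH
  have hHd : ∀ x, HasDerivAt H (1/4 - f2 x) x := fun x =>
    ((hasDerivAt_id x).div_const 4).sub (hf1d x)
  have hHmono : Monotone H := by
    apply monotone_of_deriv_nonneg
    · exact fun x => ((hHd x).differentiableAt)
    · intro x; rw [(hHd x).deriv]; linarith [(hf2bdd x).2]
  have hH0 : H 0 = 0 := by
    simp [hH, hf1, hD]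
  have hf10 : ∀ x, f1 x = x/4 - H x := by intro x; simp only [hH]; ring
  set G : ℝ → ℝ := fun x => x^2/8 - L x with hG
  have hGd : ∀ x, HasDerivAt G (H x) x := by
    intro x
    have := ((hasDerivAt_pow 2 x).div_const 8).fun_sub (hLd x)
    convert this using 1
    · rfl
    · rfl
    rw [hf10 x]; push_cast; ring
  have hG0 : G 0 = 0 := by simp [hG, hL, hD]
  have key : 0 ≤ G h := by
    rcases le_or_gt 0 h with hh | hh
    · have mono : MonotoneOn G (Set.Ici 0) := by
        apply monotoneOn_of_deriv_nonneg (convex_Ici 0)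
          (Continuous.continuousOn (by
            exact continuous_iff_continuousAt.2 fun x => (hGd x).continuousAt))
          (fun x _ => (hGd x).differentiableAt.differentiableWithinAt)
        intro x hx
        rw [(hGd x).deriv]
        have : H 0 ≤ H x := hHmono (le_of_lt (by simpa using hx))
        linarith [hH0 ▸ this]
      have := mono (Set.self_mem_Ici) hh hh
      linarith [hG0 ▸ this]
    · have anti : AntitoneOn G (Set.Iic 0) := by
        apply antitoneOn_of_deriv_nonpos (convex_Iic 0)
          (Continuous.continuousOn (by
            exact continuous_iff_continuousAt.2 fun x => (hGd x).continuousAt))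
          (fun x _ => (hGd x).differentiableAt.differentiableWithinAt)
        intro x hx
        rw [(hGd x).deriv]
        have : H x ≤ H 0 := hHmono (le_of_lt (by simpa using hx))
        linarith [hH0 ▸ this]
      have := anti (le_of_lt hh) (Set.self_mem_Iic) (le_of_lt hh)
      linarith [hG0 ▸ this]
  have : L h ≤ h^2/8 := by simpa [hG] using key
  simpa [hL, hD] using this

lemma integrable_of_bdd {α : Type*} [MeasurableSpace α] {ν : Measure α} [IsFiniteMeasure ν]
    {g : α → ℝ} (hg : Measurable g) {C : ℝ} (h : ∀ x, |g x| ≤ C) : Integrable g ν :=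
  ⟨hg.aestronglyMeasurable, HasFiniteIntegral.of_bounded (C := C) (ae_of_all _ h)⟩

lemma hoeffding_lemma {α : Type*} [MeasurableSpace α] (ν : Measure α) [IsProbabilityMeasure ν]
    (Y : α → ℝ) (hY : Measurable Y) (c : ℝ)
    (hosc : ∀ x y, Y x - Y y ≤ c) (t : ℝ) :
    ∫ x, Real.exp (t * (Y x - ∫ y, Y y ∂ν)) ∂ν ≤ Real.exp (t^2 * c^2 / 8) := by
  have hne : Nonempty α := by
    by_contra hcon
    rw [not_nonempty_iff] at hcon
    have h1 : ν Set.univ = 1 := measure_univ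
    rw [Set.univ_eq_empty_iff.2 hcon, measure_empty] at h1
    exact zero_ne_one h1
  have x₀ : α := Classical.choice hne
  have hc0 : 0 ≤ c := by have := hosc x₀ x₀; linarith
  have hbdd : BddBelow (Set.range Y) := ⟨Y x₀ - c, by
    rintro _ ⟨x, rfl⟩; have := hosc x₀ x; linarith⟩
  set a : ℝ := ⨅ x, Y x with ha_def
  set b : ℝ := a + c with hb_def
  have ha : ∀ x, a ≤ Y x := fun x => ciInf_le hbdd x
  have hb : ∀ x, Y x ≤ b := by
    intro x
    have : Y x - c ≤ a := le_ciInf (fun y => by have := hosc x y; linarith)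
    linarith
  set M : ℝ := max |a| |b| with hM
  have hYabs : ∀ x, |Y x| ≤ M := by
    intro x
    rw [abs_le]
    constructor
    · calc -M ≤ -|a| := by simp [hM]
        _ ≤ a := neg_abs_le a
        _ ≤ Y x := ha x
    · calc Y x ≤ b := hb x
        _ ≤ |b| := le_abs_self b
        _ ≤ M := le_max_right _ _
  have hYint : Integrable Y ν := integrable_of_bdd hY hYabs
  set m : ℝ := ∫ y, Y y ∂ν with hm_def
  have ham : a ≤ m := by
    calc a = ∫ _, a ∂ν := by simp
      _ ≤ m := integral_mono (integrable_const a) hYint ha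
  have hmb : m ≤ b := by
    calc m ≤ ∫ _, b ∂ν := integral_mono hYint (integrable_const b) hb
      _ = b := by simp
  rcases eq_or_lt_of_le hc0 with hc | hc
  · -- c = 0 : Y is constant
    have hconst : ∀ x, Y x = Y x₀ := by
      intro x
      have h1 := hosc x x₀; have h2 := hosc x₀ x
      rw [← hc] at h1 h2; linarith
    have hm : m = Y x₀ := by
      rw [hm_def]
      have : (fun y => Y y) = fun _ => Y x₀ := funext hconst
      rw [this]; simp
    have : ∀ x, Real.exp (t * (Y x - m)) = 1 := by
      intro x; rw [hconst x, hm]; simp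
    rw [funext this]
    simp [← hc]
  · -- c > 0, so a < b
    have hab : a < b := by rw [hb_def]; linarith
    have hba : (0:ℝ) < b - a := by linarith
    -- pointwise convexity bound
    have hpt : ∀ x, Real.exp (t * Y x) ≤
        (b - Y x) / (b - a) * Real.exp (t * a) + (Y x - a) / (b - a) * Real.exp (t * b) := by
      intro x
      have hs : (0:ℝ) ≤ (b - Y x) / (b - a) := div_nonneg (by linarith [hb x]) hba.le
      have hr : (0:ℝ) ≤ (Y x - a) / (b - a) := div_nonneg (by linarith [ha x]) hba.le
      have hsr : (b - Y x) / (b - a) + (Y x - a) / (b - a) = 1 := by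
        field_simp
        ring
      have := convexOn_exp.2 (Set.mem_univ (t*a)) (Set.mem_univ (t*b)) hs hr hsr
      simp only [smul_eq_mul] at this
      have harg : (b - Y x) / (b - a) * (t * a) + (Y x - a) / (b - a) * (t * b) = t * Y x := by
        field_simp; ring
      rwa [harg] at this
    -- integrate
    have hexp_int : Integrable (fun x => Real.exp (t * Y x)) ν := by
      apply integrable_of_bdd (by fun_prop)
      intro x
      rw [abs_of_pos (exp_pos _)]
      apply Real.exp_le_exp.2
      calc t * Y x ≤ |t * Y x| := le_abs_self _
        _ = |t| * |Y x| := abs_mul _ _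
        _ ≤ |t| * M := by
            apply mul_le_mul_of_nonneg_left (hYabs x) (abs_nonneg t)
    have hint1 : ∫ x, Real.exp (t * Y x) ∂ν ≤
        (b - m) / (b - a) * Real.exp (t * a) + (m - a) / (b - a) * Real.exp (t * b) := by
      have e1 : Integrable (fun x => (b - Y x) / (b - a) * Real.exp (t * a)) ν := by
        apply integrable_of_bdd (by fun_prop)
        intro x
        rw [abs_mul, abs_of_nonneg (le_of_lt (Real.exp_pos (t*a))),
          abs_of_nonneg (div_nonneg (by linarith [hb x]) hba.le)]
        have hle : (b - Y x) / (b - a) ≤ 1 := by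
          rw [div_le_one hba]; linarith [ha x]
        calc (b - Y x) / (b - a) * Real.exp (t * a) ≤ 1 * Real.exp (t * a) :=
              mul_le_mul_of_nonneg_right hle (Real.exp_pos _).le
          _ = Real.exp (t * a) := one_mul _
      have e2 : Integrable (fun x => (Y x - a) / (b - a) * Real.exp (t * b)) ν := by
        apply integrable_of_bdd (by fun_prop)
        intro x
        rw [abs_mul, abs_of_nonneg (le_of_lt (Real.exp_pos (t*b))),
          abs_of_nonneg (div_nonneg (by linarith [ha x]) hba.le)]
        have hle : (Y x - a) / (b - a) ≤ 1 := by
          rw [div_le_one hba]; linarith [hb x]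
        calc (Y x - a) / (b - a) * Real.exp (t * b) ≤ 1 * Real.exp (t * b) :=
              mul_le_mul_of_nonneg_right hle (Real.exp_pos _).le
          _ = Real.exp (t * b) := one_mul _
      calc ∫ x, Real.exp (t * Y x) ∂ν
          ≤ ∫ x, ((b - Y x) / (b - a) * Real.exp (t * a) + (Y x - a) / (b - a) * Real.exp (t * b)) ∂ν :=
            integral_mono hexp_int (e1.add e2) hpt
        _ = (b - m) / (b - a) * Real.exp (t * a) + (m - a) / (b - a) * Real.exp (t * b) := by
            rw [integral_add e1 e2, integral_mul_const, integral_mul_const,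
              integral_div, integral_div,
              integral_sub (integrable_const b) hYint, integral_sub hYint (integrable_const a)]
            simp [hm_def]
    set p : ℝ := (m - a) / (b - a) with hp_def
    have hp0 : 0 ≤ p := div_nonneg (by linarith) hba.le
    have hp1 : p ≤ 1 := by
      rw [hp_def, div_le_one hba]; linarith
    set h0 : ℝ := t * (b - a) with hh0_def
    have key : ∫ x, Real.exp (t * (Y x - m)) ∂ν ≤
        Real.exp (-(p * h0)) * (1 - p + p * Real.exp h0) := by
      have expand : ∀ x, Real.exp (t * (Y x - m)) = Real.exp (-(t * m)) * Real.exp (t * Y x) := by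
        intro x; rw [← Real.exp_add]; ring_nf
      rw [funext expand, integral_const_mul]
      have h2 : Real.exp (-(p * h0)) * (1 - p + p * Real.exp h0) =
          Real.exp (-(t*m)) * ((b - m) / (b - a) * Real.exp (t * a) + (m - a) / (b - a) * Real.exp (t * b)) := by
        have h1p : (b - m) / (b - a) = 1 - p := by rw [hp_def]; field_simp; ring
        rw [h1p, ← hp_def]
        have htb : Real.exp (t * b) = Real.exp (t * a) * Real.exp h0 := by
          rw [← Real.exp_add, hh0_def]; ring_nf
        rw [htb]
        have hpm : -(p * h0) = t * a - t * m := by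
          rw [hp_def, hh0_def]; field_simp; ring
        rw [hpm, Real.exp_sub, ← Real.exp_add, Real.exp_add, Real.exp_neg, div_eq_mul_inv]
        ring
      rw [h2]
      exact mul_le_mul_of_nonneg_left hint1 (Real.exp_pos _).le
    have hD : 0 < 1 - p + p * Real.exp h0 := by
      rcases eq_or_lt_of_le hp0 with hpz | hpz
      · simp [← hpz]
      · have := mul_pos hpz (Real.exp_pos h0); linarith
    calc ∫ x, Real.exp (t * (Y x - m)) ∂ν
        ≤ Real.exp (-(p * h0)) * (1 - p + p * Real.exp h0) := key
      _ = Real.exp (-(p * h0) + Real.log (1 - p + p * Real.exp h0)) := by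
          rw [Real.exp_add, Real.exp_log hD]
      _ ≤ Real.exp (h0^2/8) := Real.exp_le_exp.2 (logMgfBound hp0 hp1 h0)
      _ = Real.exp (t^2 * c^2 / 8) := by
          congr 1
          rw [hh0_def, hb_def]; ring

lemma nonempty_of_prob {α : Type*} [MeasurableSpace α] (ν : Measure α)
    [IsProbabilityMeasure ν] : Nonempty α := by
  by_contra hcon
  rw [not_nonempty_iff] at hcon
  have h1 : ν Set.univ = 1 := measure_univ
  rw [Set.univ_eq_empty_iff.2 hcon, measure_empty] at h1
  exact zero_ne_one h1

lemma osc_le {E : Type*} {n : ℕ} (f : (Fin n → E) → ℝ) (c : Fin n → ℝ)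
    (hbdd : ∀ i x y, |f x - f (Function.update x i y)| ≤ c i) (x y : Fin n → E) :
    |f x - f y| ≤ ∑ i, c i := by
  classical
  have key : ∀ s : Finset (Fin n), |f (s.piecewise x y) - f y| ≤ ∑ i ∈ s, c i := by
    intro s
    induction s using Finset.induction_on with
    | empty => simp
    | insert a s hns ih =>
      rw [Finset.piecewise_insert, Finset.sum_insert hns]
      calc |f (Function.update (s.piecewise x y) a (x a)) - f y|
          ≤ |f (Function.update (s.piecewise x y) a (x a)) - f (s.piecewise x y)|
            + |f (s.piecewise x y) - f y| := abs_sub_le _ _ _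
        _ ≤ c a + ∑ i ∈ s, c i := by
            apply add_le_add _ ih
            rw [abs_sub_comm]
            exact hbdd a _ (x a)
  simpa using key Finset.univ

lemma measurable_consPair {E : Type*} [MeasurableSpace E] {n : ℕ} :
    Measurable (fun p : E × (Fin n → E) => (Fin.cons p.1 p.2 : Fin (n+1) → E)) := by
  apply measurable_pi_iff.2
  intro j
  refine Fin.cases ?_ ?_ j
  · simpa using measurable_fst
  · intro i; simp; exact (measurable_pi_apply i).comp measurable_snd

set_option maxHeartbeats 2000000 in
lemma mgf_bound {E : Type*} [MeasurableSpace E] :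
    ∀ (n : ℕ) (ν : Fin n → Measure E) (_ : ∀ i, IsProbabilityMeasure (ν i))
      (g : (Fin n → E) → ℝ) (_ : Measurable g) (c : Fin n → ℝ)
      (_ : ∀ i x y, |g x - g (Function.update x i y)| ≤ c i) (t : ℝ),
    ∫ x, Real.exp (t * (g x - ∫ x', g x' ∂(Measure.pi ν))) ∂(Measure.pi ν)
      ≤ Real.exp (t^2 * (∑ i, (c i)^2) / 8) := by
  intro n
  induction n with
  | zero =>
    intro ν hprob g hg c hbdd t
    haveI := hprob
    have hgc : ∀ x : Fin 0 → E, g x = g (fun i => i.elim0) :=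
      fun x => congrArg g (funext fun i => i.elim0)
    have hint : ∫ x', g x' ∂(Measure.pi ν) = g (fun i => i.elim0) := by
      rw [show g = (fun _ => g (fun i => i.elim0)) from funext hgc]
      simp
    have h1 : (fun x => Real.exp (t * (g x - ∫ x', g x' ∂(Measure.pi ν)))) = fun _ => (1:ℝ) := by
      funext x
      rw [hint, hgc x]
      simp
    rw [h1]
    simp
  | succ n ih =>
    intro ν hprob g hg c hbdd t
    haveI := hprob
    haveI : Nonempty E := nonempty_of_prob (ν 0)
    have x₀ : Fin (n+1) → E := fun _ => Classical.arbitrary E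
    set ν' : Fin n → Measure E := fun j => ν ((0 : Fin (n+1)).succAbove j) with hν'
    haveI hprob' : ∀ j, IsProbabilityMeasure (ν' j) := fun j => hprob _
    set PP : Measure (Fin (n+1) → E) := Measure.pi ν with hPP
    set PP' : Measure (Fin n → E) := Measure.pi ν' with hPP'
    set e := MeasurableEquiv.piFinSuccAbove (fun _ : Fin (n+1) => E) 0 with he
    have hmp : MeasurePreserving e PP ((ν 0).prod PP') :=
      measurePreserving_piFinSuccAbove (fun i => ν i) 0
    have hesymm : ∀ p : E × (Fin n → E), e.symm p = Fin.cons p.1 p.2 := by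
      intro p
      simp [he, MeasurableEquiv.piFinSuccAbove, Fin.insertNthEquiv, Fin.insertNth_zero']
    -- boundedness of g
    have hc0 : ∀ i, 0 ≤ c i := by
      intro i
      have := hbdd i x₀ (x₀ i)
      rwa [Function.update_eq_self, sub_self, abs_zero] at this
    set Cg : ℝ := |g x₀| + ∑ i, c i with hCg
    have hgbdd : ∀ x, |g x| ≤ Cg := by
      intro x
      have h1 := osc_le g c hbdd x x₀
      have h2 := abs_sub_abs_le_abs_sub (g x) (g x₀)
      rw [hCg]; linarith
    -- measurability helpers
    have hGm : Measurable (fun p : E × (Fin n → E) => g (Fin.cons p.1 p.2)) :=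
      hg.comp measurable_consPair
    have hGy : ∀ z : Fin n → E, Measurable (fun y => g (Fin.cons y z)) := fun z =>
      hGm.comp (measurable_id.prodMk measurable_const)
    set h : (Fin n → E) → ℝ := fun z => ∫ y, g (Fin.cons y z) ∂(ν 0) with hh
    have hh_meas : Measurable h := by
      have : Measurable (fun p : (Fin n → E) × E => g (Fin.cons p.2 p.1)) :=
        hGm.comp measurable_swap
      exact this.stronglyMeasurable.integral_prod_right'.measurable
    have hh_bdd : ∀ z, |h z| ≤ Cg := by
      intro z
      rw [hh]
      calc |∫ y, g (Fin.cons y z) ∂(ν 0)| = ‖∫ y, g (Fin.cons y z) ∂(ν 0)‖ := rfl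
        _ ≤ Cg * ((ν 0) Set.univ).toReal :=
            norm_integral_le_of_norm_le_const (ae_of_all _ fun y => hgbdd _)
        _ = Cg := by simp
    obtain ⟨m, hm_def⟩ : ∃ m : ℝ, m = ∫ x', g x' ∂PP := ⟨_, rfl⟩
    rw [← hm_def]
    -- Fubini: m = ∫ h dPP'
    have hΦg_int : Integrable (fun p : E × (Fin n → E) => g (Fin.cons p.1 p.2)) ((ν 0).prod PP') :=
      integrable_of_bdd hGm (fun p => hgbdd _)
    have hm_fub : ∫ z, h z ∂PP' = m := by
      rw [hm_def, ← (MeasurePreserving.symm e hmp).integral_comp e.symm.measurableEmbedding g]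
      have : (fun p => g (e.symm p)) = fun p : E × (Fin n → E) => g (Fin.cons p.1 p.2) := by
        funext p; rw [hesymm]
      rw [this, integral_prod _ hΦg_int,
        ← integral_integral_swap (f := fun y z => g (Fin.cons y z)) hΦg_int]
    -- bounded differences of h
    have hbddh : ∀ (j : Fin n) (z : Fin n → E) (w : E),
        |h z - h (Function.update z j w)| ≤ c j.succ := by
      intro j z w
      have hint1 : Integrable (fun y => g (Fin.cons y z)) (ν 0) :=
        integrable_of_bdd (hGy z) (fun y => hgbdd _)
      have hint2 : Integrable (fun y => g (Fin.cons y (Function.update z j w))) (ν 0) :=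
        integrable_of_bdd (hGy _) (fun y => hgbdd _)
      rw [hh]
      rw [← integral_sub hint1 hint2]
      calc |∫ y, (g (Fin.cons y z) - g (Fin.cons y (Function.update z j w))) ∂(ν 0)|
          = ‖∫ y, (g (Fin.cons y z) - g (Fin.cons y (Function.update z j w))) ∂(ν 0)‖ := rfl
        _ ≤ c j.succ * ((ν 0) Set.univ).toReal := by
            apply norm_integral_le_of_norm_le_const
            apply ae_of_all
            intro y
            rw [Real.norm_eq_abs, Fin.cons_update]
            exact hbdd j.succ (Fin.cons y z) w
        _ = c j.succ := by simp
    -- inner Hoeffding bound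
    set K : ℝ := Real.exp (t^2 * (c 0)^2 / 8) with hK
    have hinner : ∀ z : Fin n → E,
        ∫ y, Real.exp (t * (g (Fin.cons y z) - m)) ∂(ν 0) ≤ K * Real.exp (t * (h z - m)) := by
      intro z
      have hosc : ∀ y y', g (Fin.cons y z) - g (Fin.cons y' z) ≤ c 0 := by
        intro y y'
        have := hbdd 0 (Fin.cons y' z) y
        rw [Fin.update_cons_zero] at this
        rw [abs_sub_comm] at this
        have := abs_le.1 this
        linarith [this.1]
      have hhoef := hoeffding_lemma (ν 0) (fun y => g (Fin.cons y z)) (hGy z) (c 0) hosc t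
      have hsplit : ∀ y, Real.exp (t * (g (Fin.cons y z) - m)) =
          Real.exp (t * (h z - m)) * Real.exp (t * (g (Fin.cons y z) - h z)) := by
        intro y
        rw [← Real.exp_add]
        congr 1
        ring
      rw [funext hsplit, integral_const_mul]
      rw [mul_comm K _]
      apply mul_le_mul_of_nonneg_left _ (Real.exp_pos _).le
      exact hhoef
    -- main chain
    have hΦm : Measurable (fun p : E × (Fin n → E) => Real.exp (t * (g (Fin.cons p.1 p.2) - m))) :=
      Real.measurable_exp.comp (((hGm.sub measurable_const)).const_mul t)
    set CΦ : ℝ := Real.exp (|t| * (Cg + |m|)) with hCΦ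
    have hΦbdd : ∀ p : E × (Fin n → E), |Real.exp (t * (g (Fin.cons p.1 p.2) - m))| ≤ CΦ := by
      intro p
      rw [abs_of_pos (Real.exp_pos _), hCΦ]
      apply Real.exp_le_exp.2
      calc t * (g (Fin.cons p.1 p.2) - m) ≤ |t * (g (Fin.cons p.1 p.2) - m)| := le_abs_self _
        _ = |t| * |g (Fin.cons p.1 p.2) - m| := abs_mul _ _
        _ ≤ |t| * (Cg + |m|) := by
            apply mul_le_mul_of_nonneg_left _ (abs_nonneg t)
            calc |g (Fin.cons p.1 p.2) - m| ≤ |g (Fin.cons p.1 p.2)| + |m| := abs_sub _ _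
              _ ≤ Cg + |m| := by linarith [hgbdd (Fin.cons p.1 p.2)]
    have hΦint : Integrable (fun p : E × (Fin n → E) => Real.exp (t * (g (Fin.cons p.1 p.2) - m)))
        ((ν 0).prod PP') := integrable_of_bdd hΦm hΦbdd
    have hI_meas : Measurable (fun z => ∫ y, Real.exp (t * (g (Fin.cons y z) - m)) ∂(ν 0)) := by
      have : Measurable (fun p : (Fin n → E) × E => Real.exp (t * (g (Fin.cons p.2 p.1) - m))) :=
        Real.measurable_exp.comp ((((hg.comp (measurable_consPair.comp measurable_swap)).sub
          measurable_const)).const_mul t)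
      exact this.stronglyMeasurable.integral_prod_right'.measurable
    have hI_bdd : ∀ z, |∫ y, Real.exp (t * (g (Fin.cons y z) - m)) ∂(ν 0)| ≤ CΦ := by
      intro z
      calc |∫ y, Real.exp (t * (g (Fin.cons y z) - m)) ∂(ν 0)|
          = ‖∫ y, Real.exp (t * (g (Fin.cons y z) - m)) ∂(ν 0)‖ := rfl
        _ ≤ CΦ * ((ν 0) Set.univ).toReal :=
            norm_integral_le_of_norm_le_const (ae_of_all _ fun y => hΦbdd (y, z))
        _ = CΦ := by simp
    have hexp_h_bdd : ∀ z, |Real.exp (t * (h z - m))| ≤ CΦ := by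
      intro z
      rw [abs_of_pos (Real.exp_pos _), hCΦ]
      apply Real.exp_le_exp.2
      calc t * (h z - m) ≤ |t * (h z - m)| := le_abs_self _
        _ = |t| * |h z - m| := abs_mul _ _
        _ ≤ |t| * (Cg + |m|) := by
            apply mul_le_mul_of_nonneg_left _ (abs_nonneg t)
            calc |h z - m| ≤ |h z| + |m| := abs_sub _ _
              _ ≤ Cg + |m| := by linarith [hh_bdd z]
    have hRHS_int : Integrable (fun z => K * Real.exp (t * (h z - m))) PP' :=
      (integrable_of_bdd (Real.measurable_exp.comp
        ((hh_meas.sub measurable_const).const_mul t)) hexp_h_bdd).const_mul K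
    have hIH := ih ν' hprob' h hh_meas (fun j => c j.succ) (fun j z w => hbddh j z w) t
    rw [show (Measure.pi ν') = PP' from rfl] at hIH
    rw [hm_fub] at hIH
    calc ∫ x, Real.exp (t * (g x - m)) ∂PP
        = ∫ p, Real.exp (t * (g (e.symm p) - m)) ∂((ν 0).prod PP') := by
          rw [(MeasurePreserving.symm e hmp).integral_comp e.symm.measurableEmbedding
            (fun x => Real.exp (t * (g x - m)))]
      _ = ∫ p : E × (Fin n → E), Real.exp (t * (g (Fin.cons p.1 p.2) - m)) ∂((ν 0).prod PP') := by
          congr 1; funext p; rw [hesymm]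
      _ = ∫ y, ∫ z, Real.exp (t * (g (Fin.cons y z) - m)) ∂PP' ∂(ν 0) := integral_prod _ hΦint
      _ = ∫ z, ∫ y, Real.exp (t * (g (Fin.cons y z) - m)) ∂(ν 0) ∂PP' :=
          integral_integral_swap (f := fun y z => Real.exp (t * (g (Fin.cons y z) - m))) hΦint
      _ ≤ ∫ z, K * Real.exp (t * (h z - m)) ∂PP' :=
          integral_mono (integrable_of_bdd hI_meas hI_bdd) hRHS_int hinner
      _ = K * ∫ z, Real.exp (t * (h z - m)) ∂PP' := integral_const_mul _ _
      _ ≤ K * Real.exp (t^2 * (∑ j : Fin n, (c (Fin.succ j))^2) / 8) := by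
          apply mul_le_mul_of_nonneg_left hIH (Real.exp_pos _).le
      _ = Real.exp (t^2 * (∑ i, (c i)^2) / 8) := by
          rw [hK, ← Real.exp_add]
          congr 1
          rw [Fin.sum_univ_succ]
          ring

lemma map_eq_pi {Ω E : Type*} [MeasurableSpace Ω] [MeasurableSpace E] {μ : Measure Ω}
    [IsProbabilityMeasure μ] {n : ℕ} (X : Fin n → Ω → E) (hXmeas : ∀ i, Measurable (X i))
    (hXindep : iIndepFun X μ) :
    Measure.map (fun ω i => X i ω) μ = Measure.pi (fun i => Measure.map (X i) μ) := by
  refine (Measure.pi_eq fun s hs => ?_).symm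
  rw [Measure.map_apply (measurable_pi_lambda _ hXmeas) (MeasurableSet.univ_pi hs)]
  have hpre : (fun ω i => X i ω) ⁻¹' Set.univ.pi s = ⋂ i ∈ Finset.univ, X i ⁻¹' s i := by
    ext ω; simp [Set.mem_pi]
  rw [hpre, hXindep.measure_inter_preimage_eq_mul Finset.univ (fun i _ => hs i)]
  exact Finset.prod_congr rfl fun i _ => (Measure.map_apply (hXmeas i) (hs i)).symm

lemma tail_bound {E : Type*} [MeasurableSpace E] {n : ℕ} (ν : Fin n → Measure E)
    (hprob : ∀ i, IsProbabilityMeasure (ν i)) (g : (Fin n → E) → ℝ) (hg : Measurable g)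
    (c : Fin n → ℝ)
    (hbdd : ∀ i x y, |g x - g (Function.update x i y)| ≤ c i)
    (ε : ℝ) (hε : 0 < ε) :
    (Measure.pi ν) {x | ε < g x - ∫ x', g x' ∂(Measure.pi ν)}
      ≤ ENNReal.ofReal (Real.exp (-2 * ε^2 / ∑ i, (c i)^2)) := by
  haveI := hprob
  have hne : Nonempty (Fin n → E) := by
    cases n with
    | zero => exact ⟨fun i => i.elim0⟩
    | succ k =>
      haveI : Nonempty E := nonempty_of_prob (ν 0)
      exact ⟨fun _ => Classical.arbitrary E⟩
  have x₀ : Fin n → E := Classical.choice hne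
  have hc0 : ∀ i, 0 ≤ c i := by
    intro i
    have := hbdd i x₀ (x₀ i)
    rwa [Function.update_eq_self, sub_self, abs_zero] at this
  set S : ℝ := ∑ i, (c i)^2 with hS
  set m : ℝ := ∫ x', g x' ∂(Measure.pi ν) with hm
  by_cases hS0 : S = 0
  · -- degenerate case: all c i = 0, g constant, set empty
    have hsum : ∑ i, (c i)^2 = 0 := by rw [← hS]; exact hS0
    have hci : ∀ i, c i = 0 := fun i =>
      pow_eq_zero_iff (two_ne_zero) |>.1
        ((Finset.sum_eq_zero_iff_of_nonneg (fun j _ => sq_nonneg (c j))).1 hsum i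
          (Finset.mem_univ i))
    have hgc : ∀ x, g x = g x₀ := by
      intro x
      have h1 := osc_le g c hbdd x x₀
      rw [Finset.sum_eq_zero (fun i _ => hci i)] at h1
      have := abs_nonneg (g x - g x₀)
      have : |g x - g x₀| = 0 := le_antisymm h1 this
      have := abs_eq_zero.1 this
      linarith
    have hmz : m = g x₀ := by
      rw [hm, show g = fun _ => g x₀ from funext hgc]
      simp
    have hempty : {x : Fin n → E | ε < g x - m} = ∅ := by
      ext x
      simp only [Set.mem_setOf_eq, Set.mem_empty_iff_false, iff_false, not_lt]
      rw [hgc x, hmz]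
      linarith
    rw [hempty, measure_empty]
    exact zero_le
  · have hSpos : 0 < S := lt_of_le_of_ne (Finset.sum_nonneg fun i _ => sq_nonneg _) (Ne.symm hS0)
    set t : ℝ := 4 * ε / S with ht
    have htpos : 0 < t := by positivity
    -- boundedness of g
    set Cg : ℝ := |g x₀| + ∑ i, c i with hCg
    have hgbdd : ∀ x, |g x| ≤ Cg := by
      intro x
      have h1 := osc_le g c hbdd x x₀
      have h2 := abs_sub_abs_le_abs_sub (g x) (g x₀)
      rw [hCg]; linarith
    have hint : Integrable (fun x => Real.exp (t * (g x - m))) (Measure.pi ν) := by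
      have hmeas1 : Measurable (fun x : Fin n → E => Real.exp (t * (g x - m))) := by fun_prop
      apply integrable_of_bdd hmeas1 (C := Real.exp (|t| * (Cg + |m|)))
      intro x
      rw [abs_of_pos (Real.exp_pos _)]
      apply Real.exp_le_exp.2
      calc t * (g x - m) ≤ |t * (g x - m)| := le_abs_self _
        _ = |t| * |g x - m| := abs_mul _ _
        _ ≤ |t| * (Cg + |m|) := by
            apply mul_le_mul_of_nonneg_left _ (abs_nonneg t)
            calc |g x - m| ≤ |g x| + |m| := abs_sub _ _
              _ ≤ Cg + |m| := by linarith [hgbdd x]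
    have hchern := measure_ge_le_exp_mul_mgf (X := fun x => g x - m) (μ := Measure.pi ν)
      ε htpos.le hint
    have hmgf : mgf (fun x => g x - m) (Measure.pi ν) t ≤ Real.exp (t^2 * S / 8) := by
      have := mgf_bound n ν hprob g hg c hbdd t
      rw [← hm, ← hS] at this
      exact this
    have hsub : {x : Fin n → E | ε < g x - m} ⊆ {x : Fin n → E | ε ≤ g x - m} := by
      intro x hx
      simp only [Set.mem_setOf_eq] at hx ⊢
      exact hx.le
    calc (Measure.pi ν) {x | ε < g x - m}
        ≤ (Measure.pi ν) {x | ε ≤ g x - m} := measure_mono hsub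
      _ = ENNReal.ofReal (((Measure.pi ν) {x | ε ≤ g x - m}).toReal) :=
          (ENNReal.ofReal_toReal (measure_ne_top _ _)).symm
      _ ≤ ENNReal.ofReal (Real.exp (-2 * ε^2 / S)) := by
          apply ENNReal.ofReal_le_ofReal
          calc ((Measure.pi ν) {x | ε ≤ g x - m}).toReal
              ≤ Real.exp (-t * ε) * mgf (fun x => g x - m) (Measure.pi ν) t := hchern
            _ ≤ Real.exp (-t * ε) * Real.exp (t^2 * S / 8) :=
                mul_le_mul_of_nonneg_left hmgf (Real.exp_pos _).le
            _ = Real.exp (-2 * ε^2 / S) := by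
                rw [← Real.exp_add]
                congr 1
                rw [ht]
                field_simp
                ring

theorem mcdiarmid {Ω E : Type*} [MeasurableSpace Ω] [MeasurableSpace E]
    {μ : Measure Ω} [IsProbabilityMeasure μ] {n : ℕ}
    (X : Fin n → Ω → E) (hXmeas : ∀ i, Measurable (X i))
    (hXindep : iIndepFun X μ)
    (f : (Fin n → E) → ℝ) (hfmeas : Measurable f)
    (c : Fin n → ℝ)
    (hbdd : ∀ (i : Fin n) (x : Fin n → E) (y : E),
      |f x - f (Function.update x i y)| ≤ c i)
    (ε : ℝ) (hε : 0 < ε) :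
    μ {ω | ε < |f (fun i => X i ω) - ∫ ω', f (fun i => X i ω') ∂μ|} ≤
      ENNReal.ofReal (2 * Real.exp (-2 * ε ^ 2 / ∑ i, (c i) ^ 2)) := by
  have hprobν : ∀ i, IsProbabilityMeasure (Measure.map (X i) μ) := fun i =>
    Measure.isProbabilityMeasure_map (hXmeas i).aemeasurable
  set ν : Fin n → Measure E := fun i => Measure.map (X i) μ with hν
  have hXm : Measurable (fun ω (i : Fin n) => X i ω) := measurable_pi_lambda _ hXmeas
  have hmap : μ.map (fun ω i => X i ω) = Measure.pi ν := map_eq_pi X hXmeas hXindep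
  have hIeq : ∫ ω', f (fun i => X i ω') ∂μ = ∫ x, f x ∂(Measure.pi ν) := by
    rw [← hmap, integral_map hXm.aemeasurable hfmeas.aestronglyMeasurable]
  rw [hIeq]
  have hsetm : MeasurableSet {x : Fin n → E | ε < |f x - ∫ x', f x' ∂(Measure.pi ν)|} :=
    measurableSet_lt measurable_const ((hfmeas.sub measurable_const).abs)
  have hμA : μ {ω | ε < |f (fun i => X i ω) - ∫ x, f x ∂(Measure.pi ν)|}
      = (Measure.pi ν) {x | ε < |f x - ∫ x', f x' ∂(Measure.pi ν)|} := by
    have h := Measure.map_apply (f := fun ω i => X i ω) (μ := μ) hXm hsetm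
    rw [hmap] at h
    exact h.symm
  rw [hμA]
  haveI := hprobν
  have hbdd2 : ∀ (i : Fin n) (x : Fin n → E) (y : E),
      |(-f) x - (-f) (Function.update x i y)| ≤ c i := by
    intro i x y
    simp only [Pi.neg_apply]
    rw [show -f x - -f (Function.update x i y) = -(f x - f (Function.update x i y)) by ring,
      abs_neg]
    exact hbdd i x y
  have h1 := tail_bound ν hprobν f hfmeas c hbdd ε hε
  have h2 := tail_bound ν hprobν (-f) hfmeas.neg c hbdd2 ε hε
  have hsplit : {x : Fin n → E | ε < |f x - ∫ x', f x' ∂(Measure.pi ν)|} ⊆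
      {x | ε < f x - ∫ x', f x' ∂(Measure.pi ν)}
      ∪ {x | ε < (-f) x - ∫ x', (-f) x' ∂(Measure.pi ν)} := by
    intro x hx
    simp only [Set.mem_setOf_eq, Set.mem_union, Pi.neg_apply] at hx ⊢
    rcases lt_abs.1 hx with h | h
    · left; exact h
    · right
      rw [integral_neg]
      linarith
  calc (Measure.pi ν) {x | ε < |f x - ∫ x', f x' ∂(Measure.pi ν)|}
      ≤ (Measure.pi ν) ({x | ε < f x - ∫ x', f x' ∂(Measure.pi ν)}
          ∪ {x | ε < (-f) x - ∫ x', (-f) x' ∂(Measure.pi ν)}) := measure_mono hsplit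
    _ ≤ (Measure.pi ν) {x | ε < f x - ∫ x', f x' ∂(Measure.pi ν)}
        + (Measure.pi ν) {x | ε < (-f) x - ∫ x', (-f) x' ∂(Measure.pi ν)} :=
          measure_union_le _ _
    _ ≤ ENNReal.ofReal (Real.exp (-2 * ε^2 / ∑ i, (c i)^2))
        + ENNReal.ofReal (Real.exp (-2 * ε^2 / ∑ i, (c i)^2)) := add_le_add h1 h2
    _ = ENNReal.ofReal (2 * Real.exp (-2 * ε ^ 2 / ∑ i, (c i) ^ 2)) := by
        rw [← ENNReal.ofReal_add (Real.exp_pos _).le (Real.exp_pos _).le]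
        congr 1
        ring
end
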